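/- arXiv:2208.13243 — 2 statements merged into one kernel-verified Lean document; each statement's English description precedes it below -/
import Mathlib

section
/- For every regular mapping τ, the upper s-Beurling density of the associated maximal orthogonal set satisfies D_s^+(Λ(τ)) ≤ (2(p−1)/(q−1))^s. -/
open Filter Set
open scoped ENNReal NNReal

/-- The upper `r`-Beurling density of a set `Λ ⊆ ℝ`:
`D_r^+(Λ) = limsup_{h→∞} sup_{x∈ℝ} #(Λ ∩ (x−h, x+h)) / h^r`. -/
noncomputable def beurlingDensityPlus (r : ℝ) (Λ : Set ℝ) : ℝ≥0∞ :=
  Filter.limsup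
    (fun h : ℝ => ⨆ x : ℝ, ((Λ ∩ Set.Ioo (x - h) (x + h)).encard : ℝ≥0∞) / ENNReal.ofReal (h ^ r))
    Filter.atTop

/-- `wTake I k` is the word `I_{1,k}`: the first `k` letters of `I`, padded with `0`s if `k > |I|`. -/
def wTake (I : List ℕ) (k : ℕ) : List ℕ := (I ++ List.replicate k 0).take k

/-- `τ : Σ_q^* → {-1,0,…,p-2}` is a regular mapping (words are modelled as nonempty lists of
naturals `< q`): (i) `τ(0^n) = 0`; (ii) `τ(I) ∈ {-1,…,p-2}` and `τ(I) ≡ i_n (mod q)` where `i_n`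
is the last letter of `I`; (iii) for every word `I`, `τ(I0^l) = 0` for all sufficiently large `l`. -/
def IsRegularMap (p q : ℕ) (τ : List ℕ → ℤ) : Prop :=
  (∀ n : ℕ, 1 ≤ n → τ (List.replicate n 0) = 0) ∧
  (∀ I : List ℕ, I ≠ [] → (∀ i ∈ I, i < q) →
    (-1 ≤ τ I ∧ τ I ≤ (p : ℤ) - 2 ∧ (q : ℤ) ∣ (τ I - (I.getLast! : ℤ)))) ∧
  (∀ I : List ℕ, I ≠ [] → (∀ i ∈ I, i < q) →
    ∃ L : ℕ, ∀ l : ℕ, L ≤ l → τ (I ++ List.replicate l 0) = 0)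

/-- `τ*(I) = Σ_{k ≥ 1} τ(I_{1,k}) p^{k-1}` (a finite sum for regular `τ`). -/
noncomputable def tauStar (p : ℕ) (τ : List ℕ → ℤ) (I : List ℕ) : ℤ :=
  ∑ᶠ k : ℕ, τ (wTake I (k + 1)) * (p : ℤ) ^ k

/-- The maximal orthogonal set `Λ(τ) = {τ*(I) : I ∈ Σ_q^*} ∪ {0}`, viewed as a subset of `ℝ`. -/
def LambdaTau (p q : ℕ) (τ : List ℕ → ℤ) : Set ℝ :=
  {x : ℝ | ∃ I : List ℕ, I ≠ [] ∧ (∀ i ∈ I, i < q) ∧ x = (tauStar p τ I : ℝ)} ∪ {0}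


open Filter Set
open scoped ENNReal NNReal

lemma two_sum_lb : ∀ (n : ℕ) (U : Finset ℤ), U.card = n → (∀ v ∈ U, 0 ≤ v) →
    (n : ℤ) * (n - 1) ≤ 2 * ∑ v ∈ U, v := by
  intro n
  induction n with
  | zero => intro U h h0; simpa using Finset.sum_nonneg h0
  | succ k ih =>
    intro U hcard h0
    have hne : U.Nonempty := Finset.card_pos.mp (by omega)
    set M := U.max' hne with hM
    have hMmem : M ∈ U := U.max'_mem hne
    have hMle : ∀ v ∈ U, v ≤ M := fun v hv => U.le_max' v hv
    have hM0 : 0 ≤ M := h0 M hMmem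
    have hsub : U ⊆ Finset.Icc 0 M := fun v hv => Finset.mem_Icc.mpr ⟨h0 v hv, hMle v hv⟩
    have hcard2 : U.card ≤ (Finset.Icc (0:ℤ) M).card := Finset.card_le_card hsub
    rw [Int.card_Icc] at hcard2
    have hMk : (k : ℤ) ≤ M := by omega
    have herase : (U.erase M).card = k := by rw [Finset.card_erase_of_mem hMmem, hcard]; omega
    have hIH := ih (U.erase M) herase (fun v hv => h0 v (Finset.mem_of_mem_erase hv))
    have hsum : ∑ v ∈ U.erase M, v + M = ∑ v ∈ U, v := Finset.sum_erase_add U id hMmem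
    push_cast
    nlinarith [hIH, hsum, hMk]

lemma two_sum_ub (U : Finset ℤ) (B : ℤ) (h0 : ∀ v ∈ U, 0 ≤ v) (hB : ∀ v ∈ U, v ≤ B) :
    2 * ∑ v ∈ U, v ≤ (U.card : ℤ) * (2 * B - U.card + 1) := by
  classical
  have hinj : Set.InjOn (fun v => B - v) U := fun a _ b _ h => by simpa using h
  have hcard : (U.image (fun v => B - v)).card = U.card := Finset.card_image_of_injOn hinj
  have h0' : ∀ v ∈ U.image (fun v => B - v), 0 ≤ v := by
    intro v hv
    obtain ⟨a, ha, rfl⟩ := Finset.mem_image.mp hv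
    have := hB a ha; omega
  have := two_sum_lb (U.image (fun v => B - v)).card _ rfl h0'
  rw [Finset.sum_image hinj] at this
  rw [hcard] at this
  have hsum : ∑ v ∈ U, (B - v) = U.card * B - ∑ v ∈ U, v := by
    rw [Finset.sum_sub_distrib, Finset.sum_const, nsmul_eq_mul]
  rw [hsum] at this
  nlinarith [this]

open Filter Set
open scoped ENNReal NNReal

/-- `s = log q / log p`. -/
noncomputable def expS (p q : ℕ) : ℝ := Real.log q / Real.log p
/-- `α = (p-1)/(q-1)`. -/
noncomputable def alph (p q : ℕ) : ℝ := ((p:ℝ) - 1) / ((q:ℝ) - 1)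

section Analytic

variable {p q : ℕ}

lemma hq1 (hq : 2 ≤ q) : (1:ℝ) < q := by exact_mod_cast Nat.lt_of_lt_of_le one_lt_two hq
lemma hp1 (hq : 2 ≤ q) (hqp : q ≤ p) : (1:ℝ) < p :=
  lt_of_lt_of_le (hq1 hq) (by exact_mod_cast hqp)

lemma expS_pos (hq : 2 ≤ q) (hqp : q ≤ p) : 0 < expS p q :=
  div_pos (Real.log_pos (hq1 hq)) (Real.log_pos (hp1 hq hqp))

lemma expS_le_one (hq : 2 ≤ q) (hqp : q ≤ p) : expS p q ≤ 1 := by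
  have h1 : Real.log q ≤ Real.log p :=
    Real.log_le_log (by have := hq1 hq; positivity) (by exact_mod_cast hqp)
  have h2 : 0 < Real.log p := Real.log_pos (hp1 hq hqp)
  rw [expS, div_le_one h2]; exact h1

lemma q_rpow_inv_s (hq : 2 ≤ q) (hqp : q ≤ p) : (q:ℝ) ^ (1 / expS p q) = p := by
  have hlq : Real.log q ≠ 0 := ne_of_gt (Real.log_pos (hq1 hq))
  have hq0 : (0:ℝ) < q := by have := hq1 hq; linarith
  have hp0 : (0:ℝ) < p := by have := hp1 hq hqp; linarith
  rw [expS, one_div, inv_div, Real.rpow_def_of_pos hq0]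
  rw [show Real.log q * (Real.log p / Real.log q) = Real.log p by field_simp]
  exact Real.exp_log hp0

lemma alph_one_le (hq : 2 ≤ q) (hqp : q ≤ p) : 1 ≤ alph p q := by
  rw [alph, le_div_iff₀ (by have := hq1 hq; linarith)]
  have : (q:ℝ) ≤ p := by exact_mod_cast hqp
  linarith

lemma alph_mul (hq : 2 ≤ q) : alph p q * ((q:ℝ) - 1) = (p:ℝ) - 1 := by
  have := hq1 hq
  rw [alph, div_mul_eq_mul_div, mul_div_assoc, div_self (by linarith : (q:ℝ) - 1 ≠ 0), mul_one]

/-- convexity bound: `m^(1/s) ≤ 1 + α (m - 1)` for `1 ≤ m ≤ q`. -/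
lemma rpow_inv_s_le (hq : 2 ≤ q) (hqp : q ≤ p) {m : ℝ} (hm1 : 1 ≤ m) (hmq : m ≤ q) :
    m ^ (1 / expS p q) ≤ 1 + alph p q * (m - 1) := by
  have hs0 := expS_pos hq hqp
  have hs1 := expS_le_one hq hqp
  have hc : (1:ℝ) ≤ 1 / expS p q := by
    rw [le_div_iff₀ hs0]; linarith
  have hcx := convexOn_rpow hc
  have hq1' := hq1 hq
  have ha : (0:ℝ) ≤ ((q:ℝ) - m) / ((q:ℝ) - 1) := by
    apply div_nonneg <;> linarith
  have hb : (0:ℝ) ≤ (m - 1) / ((q:ℝ) - 1) := by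
    apply div_nonneg <;> linarith
  have hab : ((q:ℝ) - m) / ((q:ℝ) - 1) + (m - 1) / ((q:ℝ) - 1) = 1 := by
    rw [← add_div, div_eq_one_iff_eq (by linarith)]; ring
  have hkey := hcx.2 (Set.mem_Ici.mpr (zero_le_one))
    (Set.mem_Ici.mpr (by positivity : (0:ℝ) ≤ (q:ℝ))) ha hb hab
  simp only [smul_eq_mul] at hkey
  have harg : ((q:ℝ) - m) / ((q:ℝ) - 1) * 1 + (m - 1) / ((q:ℝ) - 1) * q = m := by
    rw [mul_one, div_mul_eq_mul_div, ← add_div, div_eq_iff (by linarith : (q:ℝ) - 1 ≠ 0)]; ring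
  rw [harg, Real.one_rpow, q_rpow_inv_s hq hqp] at hkey
  refine le_trans hkey ?_
  apply le_of_eq
  rw [alph, mul_one]
  have hd : ((q:ℝ) - 1) ≠ 0 := by linarith
  field_simp
  ring

end Analytic

/-- The key one-step analytic inequality. -/
lemma analytic_step {p q : ℕ} (hq : 2 ≤ q) (hqp : q ≤ p) {m : ℕ} (hm1 : 1 ≤ m) (hmq : m ≤ q)
    (L : ℤ) (hmL : (m : ℤ) ≤ L + 1) (A : Finset ℤ) (hA : A.card = m) (f : ℤ → ℝ)
    (hl0 : ∀ a ∈ A, 0 ≤ f a)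
    (hsum : (p:ℝ) * (∑ a ∈ A, f a) ≤ (m:ℝ) * ((L:ℝ) - m + 1)) :
    ∑ a ∈ A, (alph p q * f a + 1) ^ expS p q ≤ (alph p q * L + 1) ^ expS p q := by
  have hs0 := expS_pos hq hqp
  have hs1 := expS_le_one hq hqp
  have hα1 := alph_one_le hq hqp
  have hp0 : (0:ℝ) < p := by have := hp1 hq hqp; linarith
  have hm0 : (0:ℝ) < m := by exact_mod_cast hm1
  have hLm : (0:ℝ) ≤ (L:ℝ) - ((m:ℝ) - 1) := by
    have : ((m:ℝ) : ℝ) ≤ (L:ℝ) + 1 := by exact_mod_cast hmL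
    linarith
  set α := alph p q with hαdef
  set s := expS p q with hsdef
  have hα0 : (0:ℝ) ≤ α := by linarith
  have hL0 : (0:ℝ) ≤ (L:ℝ) := by
    have hm1' : (1:ℝ) ≤ (m:ℝ) := by exact_mod_cast hm1
    linarith
  have hz1 : ∀ a ∈ A, (1:ℝ) ≤ α * f a + 1 := by
    intro a ha
    have h1 : 0 ≤ α * f a := mul_nonneg hα0 (hl0 a ha)
    linarith
  have hz0 : ∀ a ∈ A, (0:ℝ) ≤ α * f a + 1 := fun a ha => le_trans zero_le_one (hz1 a ha)
  -- Jensen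
  have hw : ∀ a ∈ A, (0:ℝ) ≤ (m:ℝ)⁻¹ := by intro a _; positivity
  have hwsum : ∑ _a ∈ A, (m:ℝ)⁻¹ = 1 := by
    rw [Finset.sum_const, hA, nsmul_eq_mul]; field_simp
  have hZnn : ∀ a ∈ A, (0:ℝ) ≤ (α * f a + 1) ^ s := by
    intro a ha; exact Real.rpow_nonneg (hz0 a ha) s
  have hc : (1:ℝ) ≤ 1 / s := by rw [le_div_iff₀ hs0]; linarith
  have hjen := Real.arith_mean_le_rpow_mean A (fun _ => (m:ℝ)⁻¹)
    (fun a => (α * f a + 1) ^ s) hw hwsum hZnn hc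
  have hsne : s ≠ 0 := ne_of_gt hs0
  have e1 : ∑ a ∈ A, (m:ℝ)⁻¹ * (((α * f a + 1) ^ s) ^ ((1:ℝ)/s))
      = ∑ a ∈ A, (m:ℝ)⁻¹ * (α * f a + 1) := by
    refine Finset.sum_congr rfl (fun a ha => ?_)
    rw [one_div, Real.rpow_rpow_inv (hz0 a ha) hsne]
  have hjen2 : (∑ a ∈ A, (m:ℝ)⁻¹ * ((α * f a + 1) ^ s))
      ≤ (∑ a ∈ A, (m:ℝ)⁻¹ * (α * f a + 1)) ^ ((1:ℝ)/(1/s)) := by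
    rw [← e1]; exact hjen
  rw [one_div_one_div] at hjen2
  have hsumz : ∑ a ∈ A, (m:ℝ)⁻¹ * (α * f a + 1)
      = (m:ℝ)⁻¹ * (α * (∑ a ∈ A, f a) + m) := by
    rw [← Finset.mul_sum, Finset.sum_add_distrib, Finset.sum_const, hA, nsmul_eq_mul, mul_one,
      ← Finset.mul_sum]
  set Y : ℝ := α * ((L:ℝ) - m + 1) / p + 1 with hYdef
  have hYnn : (0:ℝ) ≤ Y := by
    have : 0 ≤ α * ((L:ℝ) - m + 1) / p := by
      apply div_nonneg _ (le_of_lt hp0)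
      apply mul_nonneg hα0; linarith
    simp only [hYdef]; linarith
  have hWY : (m:ℝ)⁻¹ * (α * (∑ a ∈ A, f a) + m) ≤ Y := by
    rw [inv_mul_le_iff₀ hm0, hYdef]
    have h1 : α * (∑ a ∈ A, f a) * p ≤ α * ((m:ℝ) * ((L:ℝ) - m + 1)) := by
      calc α * (∑ a ∈ A, f a) * p = α * ((p:ℝ) * ∑ a ∈ A, f a) := by ring
      _ ≤ α * ((m:ℝ) * ((L:ℝ) - m + 1)) := by
          apply mul_le_mul_of_nonneg_left hsum hα0
    have h2 : α * (∑ a ∈ A, f a) ≤ α * ((m:ℝ) * ((L:ℝ) - m + 1)) / p := by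
      rw [le_div_iff₀ hp0]; exact h1
    calc α * (∑ a ∈ A, f a) + m ≤ α * ((m:ℝ) * ((L:ℝ) - m + 1)) / p + m := by linarith
    _ = (m:ℝ) * (α * ((L:ℝ) - m + 1) / p + 1) := by field_simp
  have hWnn : 0 ≤ ∑ a ∈ A, (m:ℝ)⁻¹ * (α * f a + 1) := by
    apply Finset.sum_nonneg
    intro a ha
    exact mul_nonneg (by positivity) (hz0 a ha)
  have hjen3 : (∑ a ∈ A, (m:ℝ)⁻¹ * ((α * f a + 1) ^ s)) ≤ Y ^ s := by
    refine le_trans hjen2 (Real.rpow_le_rpow hWnn ?_ (le_of_lt hs0))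
    rw [hsumz]; exact hWY
  have hstep : ∑ a ∈ A, ((α * f a + 1) ^ s) ≤ (m:ℝ) * Y ^ s := by
    have heq : ∑ a ∈ A, ((α * f a + 1) ^ s)
        = (m:ℝ) * ∑ a ∈ A, (m:ℝ)⁻¹ * ((α * f a + 1) ^ s) := by
      rw [← Finset.mul_sum, ← mul_assoc, mul_inv_cancel₀ (ne_of_gt hm0), one_mul]
    rw [heq]
    exact mul_le_mul_of_nonneg_left hjen3 (le_of_lt hm0)
  -- m * Y^s = (m^(1/s) * Y)^s
  have hmY : (m:ℝ) * Y ^ s = ((m:ℝ) ^ ((1:ℝ)/s) * Y) ^ s := by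
    rw [Real.mul_rpow (Real.rpow_nonneg (le_of_lt hm0) _) hYnn]
    rw [one_div, Real.rpow_inv_rpow (le_of_lt hm0) hsne]
  have hmq' : ((m:ℝ)) ≤ (q:ℝ) := by exact_mod_cast hmq
  have hm1' : (1:ℝ) ≤ (m:ℝ) := by exact_mod_cast hm1
  have hconv := rpow_inv_s_le hq hqp hm1' hmq'
  have hαM : α * ((m:ℝ) - 1) ≤ (p:ℝ) - 1 := by
    have h1 : α * ((m:ℝ) - 1) ≤ α * ((q:ℝ) - 1) := by
      apply mul_le_mul_of_nonneg_left _ hα0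
      have : ((m:ℝ)) ≤ (q:ℝ) := hmq'
      linarith
    rw [hαdef, alph_mul hq] at h1; exact h1
  have hfin : (1 + α * ((m:ℝ) - 1)) * Y ≤ α * L + 1 := by
    rw [hYdef, div_add' _ _ _ (ne_of_gt hp0), ← mul_div_assoc, div_le_iff₀ hp0]
    nlinarith [mul_nonneg (mul_nonneg hα0 hLm) (sub_nonneg.mpr hαM)]
  calc ∑ a ∈ A, ((α * f a + 1) ^ s) ≤ (m:ℝ) * Y ^ s := hstep
    _ = ((m:ℝ) ^ ((1:ℝ)/s) * Y) ^ s := hmY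
    _ ≤ ((1 + α * ((m:ℝ) - 1)) * Y) ^ s := by
        apply Real.rpow_le_rpow (mul_nonneg (Real.rpow_nonneg (le_of_lt hm0) _) hYnn)
          (mul_le_mul_of_nonneg_right hconv hYnn) (le_of_lt hs0)
    _ ≤ (α * L + 1) ^ s := by
        apply Real.rpow_le_rpow _ hfin (le_of_lt hs0)
        apply mul_nonneg _ hYnn
        have : 0 ≤ α * ((m:ℝ) - 1) := mul_nonneg hα0 (by linarith)
        linarith

/-- least digit in `{-1,…,p-2}`. -/
def Dig0 (p : ℕ) (n : ℤ) : ℤ := (n + 1) % (p:ℤ) - 1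
/-- tail after removing least digit. -/
def Tl (p : ℕ) (n : ℤ) : ℤ := (n + 1) / (p:ℤ)
/-- `j`-th digit. -/
def Dig (p : ℕ) (j : ℕ) (n : ℤ) : ℤ := Dig0 p ((Tl p)^[j] n)

/-- digit-determinacy: digits are determined by their residues mod `q`. -/
def Good (p q : ℕ) (S : Set ℤ) : Prop :=
  ∀ lam ∈ S, ∀ mu ∈ S, ∀ j : ℕ,
    (∀ i : ℕ, i ≤ j → Dig p i lam % (q:ℤ) = Dig p i mu % (q:ℤ)) → Dig p j lam = Dig p j mu

section Digits

variable {p : ℕ} (hp : 2 ≤ p)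

lemma hpz (hp : 2 ≤ p) : (0:ℤ) < (p:ℤ) := by exact_mod_cast Nat.lt_of_lt_of_le Nat.zero_lt_two hp

include hp

lemma dig0_lb (n : ℤ) : -1 ≤ Dig0 p n := by
  have := Int.emod_nonneg (n + 1) (ne_of_gt (hpz hp))
  unfold Dig0; omega

lemma dig0_ub (n : ℤ) : Dig0 p n ≤ (p:ℤ) - 2 := by
  have := Int.emod_lt_of_pos (n + 1) (hpz hp)
  unfold Dig0; omega

lemma tl_dig0 (n : ℤ) : (p:ℤ) * Tl p n + Dig0 p n = n := by
  have := Int.mul_ediv_add_emod (n + 1) (p:ℤ)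
  unfold Tl Dig0; omega

lemma dig_succ (j : ℕ) (n : ℤ) : Dig p (j+1) n = Dig p j (Tl p n) := by
  unfold Dig
  rw [Function.iterate_succ_apply]

lemma dig_zero (n : ℤ) : Dig p 0 n = Dig0 p n := rfl

lemma dig0_of_decomp {a y : ℤ} (ha1 : -1 ≤ a) (ha2 : a ≤ (p:ℤ) - 2) :
    Dig0 p (a + (p:ℤ) * y) = a := by
  unfold Dig0
  rw [show a + (p:ℤ) * y + 1 = (a + 1) + (p:ℤ) * y by ring, Int.add_mul_emod_self_left,
    Int.emod_eq_of_lt (by omega) (by omega)]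
  ring

lemma tl_of_decomp {a y : ℤ} (ha1 : -1 ≤ a) (ha2 : a ≤ (p:ℤ) - 2) :
    Tl p (a + (p:ℤ) * y) = y := by
  unfold Tl
  rw [show a + (p:ℤ) * y + 1 = (a + 1) + y * (p:ℤ) by ring,
    Int.add_mul_ediv_right _ _ (ne_of_gt (hpz hp)),
    Int.ediv_eq_zero_of_lt (by omega) (by omega), zero_add]

lemma sum_split (f : ℕ → ℤ) (M : ℕ) :
    ∑ k ∈ Finset.range (M+1), f k * (p:ℤ)^k
      = f 0 + (p:ℤ) * ∑ k ∈ Finset.range M, f (k+1) * (p:ℤ)^k := by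
  rw [Finset.sum_range_succ', Finset.mul_sum]
  simp only [pow_zero, mul_one]
  rw [add_comm]
  congr 1
  exact Finset.sum_congr rfl (fun k _ => by ring)

/-- digits of a number given by a digit expansion. -/
lemma dig_of_sum : ∀ (j : ℕ) (f : ℕ → ℤ), (∀ k, -1 ≤ f k ∧ f k ≤ (p:ℤ) - 2) →
    ∀ (N : ℕ), (∀ k, N ≤ k → f k = 0) →
      Dig p j (∑ k ∈ Finset.range N, f k * (p:ℤ)^k) = f j := by
  intro j
  induction j with
  | zero =>
    intro f hbd N hN
    rcases Nat.eq_zero_or_pos N with h0 | h1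
    · subst h0
      simp only [Finset.range_zero, Finset.sum_empty]
      have h00 : Dig0 p (0 + (p:ℤ) * 0) = 0 := dig0_of_decomp hp (by omega) (by omega)
      rw [show ((0:ℤ) + (p:ℤ) * 0) = 0 by ring] at h00
      rw [dig_zero hp, h00]
      exact (hN 0 (le_refl 0)).symm
    · obtain ⟨M, rfl⟩ : ∃ M, N = M + 1 := ⟨N - 1, by omega⟩
      rw [sum_split hp, dig_zero hp, dig0_of_decomp hp (hbd 0).1 (hbd 0).2]
  | succ j ih =>
    intro f hbd N hN
    rcases Nat.eq_zero_or_pos N with h0 | h1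
    · subst h0
      simp only [Finset.range_zero, Finset.sum_empty]
      have h00 : Tl p (0 + (p:ℤ) * 0) = 0 := tl_of_decomp hp (by omega) (by omega)
      rw [show ((0:ℤ) + (p:ℤ) * 0) = 0 by ring] at h00
      rw [dig_succ hp, h00]
      have := ih (fun k => f (k+1)) (fun k => hbd (k+1)) 0 (fun k _ => hN (k+1) (by omega))
      simpa using this
    · obtain ⟨M, rfl⟩ : ∃ M, N = M + 1 := ⟨N - 1, by omega⟩
      rw [dig_succ hp, sum_split hp, tl_of_decomp hp (hbd 0).1 (hbd 0).2]
      exact ih (fun k => f (k+1)) (fun k => hbd (k+1)) M (fun k hk => hN (k+1) (by omega))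

lemma good_shift {q : ℕ} {S : Set ℤ} (hS : Good p q S) (a : ℤ) :
    Good p q ((Tl p) '' {y | y ∈ S ∧ Dig p 0 y = a}) := by
  rintro lam ⟨y, ⟨hyS, hya⟩, rfl⟩ mu ⟨z, ⟨hzS, hza⟩, rfl⟩ j hres
  rw [← dig_succ hp, ← dig_succ hp]
  apply hS y hyS z hzS (j+1)
  intro i hi
  rcases Nat.eq_zero_or_pos i with h0 | h1
  · subst h0; rw [hya, hza]
  · obtain ⟨i', rfl⟩ : ∃ i', i = i' + 1 := ⟨i - 1, by omega⟩
    rw [dig_succ hp, dig_succ hp]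
    exact hres i' (by omega)

end Digits

lemma count_bound {p q : ℕ} (hq : 2 ≤ q) (hqp : q ≤ p) :
    ∀ (L : ℕ) (S : Set ℤ), Good p q S → ∀ (x : ℤ) (F : Finset ℤ), (↑F : Set ℤ) ⊆ S →
      (∀ y ∈ F, x ≤ y ∧ y ≤ x + L) →
      (F.card : ℝ) ≤ (alph p q * L + 1) ^ expS p q := by
  classical
  have hp2 : 2 ≤ p := le_trans hq hqp
  have hpz' : (0:ℤ) < (p:ℤ) := hpz hp2
  have hα1 := alph_one_le hq hqp
  have hs0 := expS_pos hq hqp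
  intro L
  induction L using Nat.strong_induction_on with
  | _ L IH =>
  intro S hS x F hFS hFx
  rcases Nat.eq_zero_or_pos L with hL0 | hL1
  · subst hL0
    have hc1 : F.card ≤ 1 := by
      apply Finset.card_le_one.mpr
      intro a ha b hb
      have h1 := hFx a ha
      have h2 := hFx b hb
      omega
    have : ((F.card : ℝ)) ≤ 1 := by exact_mod_cast hc1
    refine le_trans this ?_
    rw [Nat.cast_zero, mul_zero, zero_add, Real.one_rpow]
  rcases Finset.eq_empty_or_nonempty F with hFe | hFne
  · subst hFe
    simp only [Finset.card_empty, Nat.cast_zero]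
    apply Real.rpow_nonneg
    have : (0:ℝ) ≤ (L:ℝ) := by positivity
    nlinarith
  set A := F.image (Dig p 0) with hAdef
  have hmA : ∀ y ∈ F, Dig p 0 y ∈ A := fun y hy => Finset.mem_image_of_mem _ hy
  have hcardsum : F.card = ∑ a ∈ A, (F.filter (fun y => Dig p 0 y = a)).card :=
    Finset.card_eq_sum_card_fiberwise hmA
  have hAbd : ∀ a ∈ A, -1 ≤ a ∧ a ≤ (p:ℤ) - 2 := by
    intro a ha
    obtain ⟨y, _, rfl⟩ := Finset.mem_image.mp ha
    exact ⟨dig0_lb hp2 _, dig0_ub hp2 _⟩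
  -- m ≤ q
  have hresinj : Set.InjOn (fun a => a % (q:ℤ)) ↑A := by
    intro a ha b hb hab
    obtain ⟨y, hyF, rfl⟩ := Finset.mem_image.mp (Finset.mem_coe.mp ha)
    obtain ⟨z, hzF, rfl⟩ := Finset.mem_image.mp (Finset.mem_coe.mp hb)
    refine hS y (hFS hyF) z (hFS hzF) 0 ?_
    intro i hi
    obtain rfl : i = 0 := Nat.le_zero.mp hi
    exact hab
  have hmq : A.card ≤ q := by
    have h1 : (A.image (fun a => a % (q:ℤ))).card = A.card :=
      Finset.card_image_of_injOn hresinj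
    have h2 : A.image (fun a => a % (q:ℤ)) ⊆ Finset.Ico (0:ℤ) (q:ℤ) := by
      intro v hv
      obtain ⟨a, _, rfl⟩ := Finset.mem_image.mp hv
      refine Finset.mem_Ico.mpr ⟨Int.emod_nonneg _ (by positivity), Int.emod_lt_of_pos _ (by positivity)⟩
    have h3 := Finset.card_le_card h2
    rw [h1] at h3
    rw [Int.card_Ico] at h3
    omega
  have hm1 : 1 ≤ A.card := Finset.card_pos.mpr (hFne.image _)
  have hmL : A.card ≤ L + 1 := by
    have h1 : A.card ≤ F.card := Finset.card_image_le
    have h2 : F ⊆ Finset.Icc x (x + L) := by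
      intro y hy; exact Finset.mem_Icc.mpr ⟨(hFx y hy).1, (hFx y hy).2⟩
    have h3 := Finset.card_le_card h2
    rw [Int.card_Icc] at h3
    omega
  set tmin : ℤ → ℤ := fun a => (x + p - 1 - a) / p with htmin
  set tmax : ℤ → ℤ := fun a => (x + L - a) / p with htmax
  set r1 : ℤ → ℤ := fun a => (x + L - a) % p with hr1
  set r2 : ℤ → ℤ := fun a => (x + p - 1 - a) % p with hr2
  -- basic bounds for members of fibers
  have hdecomp : ∀ y ∈ F, ∀ a, Dig p 0 y = a → y = p * Tl p y + a := by
    intro y hy a hya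
    have := tl_dig0 hp2 y
    rw [dig_zero hp2] at hya
    omega
  have htbound : ∀ y ∈ F, ∀ a, Dig p 0 y = a → tmin a ≤ Tl p y ∧ Tl p y ≤ tmax a := by
    intro y hy a hya
    have hdec := hdecomp y hy a hya
    have hxy := hFx y hy
    constructor
    · have h1 : x + p - 1 - a ≤ p * Tl p y + (p - 1) := by omega
      have h2 : (x + p - 1 - a) / p ≤ (p * Tl p y + (p - 1)) / p :=
        Int.ediv_le_ediv hpz' h1
      have h3 : (p * Tl p y + (p - 1)) / p = Tl p y := by
        rw [show (p:ℤ) * Tl p y + ((p:ℤ) - 1) = ((p:ℤ) - 1) + Tl p y * p by ring,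
          Int.add_mul_ediv_right _ _ (ne_of_gt hpz'),
          Int.ediv_eq_zero_of_lt (by omega) (by omega), zero_add]
      rw [h3] at h2
      exact h2
    · have h1 : p * Tl p y ≤ x + L - a := by omega
      have h2 : (p * Tl p y) / p ≤ (x + L - a) / p := Int.ediv_le_ediv hpz' h1
      rwa [Int.mul_ediv_cancel_left _ (ne_of_gt hpz')] at h2
  have htdiff : ∀ a ∈ A, 0 ≤ tmax a - tmin a := by
    intro a ha
    obtain ⟨y, hyF, hya⟩ := Finset.mem_image.mp ha
    have := htbound y hyF a hya
    omega
  -- the key identity for p * (tmax - tmin)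
  have hkey : ∀ a : ℤ, p * (tmax a - tmin a) = (L:ℤ) - (p - 1) - r1 a + r2 a := by
    intro a
    have e1 := Int.mul_ediv_add_emod (x + L - a) (p:ℤ)
    have e2 := Int.mul_ediv_add_emod (x + p - 1 - a) (p:ℤ)
    simp only [htmax, htmin, hr1, hr2]
    rw [mul_sub]
    omega
  -- injectivity of r1, r2 on A
  have hinj_aux : ∀ (c : ℤ), Set.InjOn (fun a => (c - a) % p) ↑A := by
    intro c a ha b hb hab
    simp only at hab
    have hd : ((c - a) - (c - b)) % p = 0 :=
      Int.emod_eq_emod_iff_emod_sub_eq_zero.mp hab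
    have hdvd : (p:ℤ) ∣ (b - a) := by
      have : (c - a) - (c - b) = b - a := by ring
      rw [this] at hd
      exact Int.dvd_of_emod_eq_zero hd
    have ha' := hAbd a (Finset.mem_coe.mp ha)
    have hb' := hAbd b (Finset.mem_coe.mp hb)
    have : b - a = 0 := Int.eq_zero_of_abs_lt_dvd hdvd (by rw [abs_lt]; omega)
    omega
  have hinj1 : Set.InjOn r1 ↑A := hinj_aux (x + L)
  have hinj2 : Set.InjOn r2 ↑A := hinj_aux (x + p - 1)
  have hr1nn : ∀ a, 0 ≤ r1 a := fun a => Int.emod_nonneg _ (ne_of_gt hpz')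
  have hr2nn : ∀ a, 0 ≤ r2 a := fun a => Int.emod_nonneg _ (ne_of_gt hpz')
  have hr2ub : ∀ a, r2 a ≤ (p:ℤ) - 1 := by
    intro a
    have := Int.emod_lt_of_pos (x + p - 1 - a) hpz'
    simp only [hr2]
    omega
  -- sum bounds on r1 and r2
  have hsum1 : (A.card : ℤ) * (A.card - 1) ≤ 2 * ∑ a ∈ A, r1 a := by
    have hi : ∀ a ∈ A, ∀ b ∈ A, r1 a = r1 b → a = b := fun a ha b hb h =>
      hinj1 (Finset.mem_coe.mpr ha) (Finset.mem_coe.mpr hb) h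
    have h0 : ∀ v ∈ A.image r1, 0 ≤ v := by
      intro v hv
      obtain ⟨a, _, rfl⟩ := Finset.mem_image.mp hv
      exact hr1nn a
    have := two_sum_lb (A.image r1).card (A.image r1) rfl h0
    rw [Finset.sum_image hi, Finset.card_image_of_injOn hinj1] at this
    exact this
  have hsum2 : 2 * ∑ a ∈ A, r2 a ≤ (A.card : ℤ) * (2 * ((p:ℤ) - 1) - A.card + 1) := by
    have hi : ∀ a ∈ A, ∀ b ∈ A, r2 a = r2 b → a = b := fun a ha b hb h =>
      hinj2 (Finset.mem_coe.mpr ha) (Finset.mem_coe.mpr hb) h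
    have h0 : ∀ v ∈ A.image r2, 0 ≤ v := by
      intro v hv
      obtain ⟨a, _, rfl⟩ := Finset.mem_image.mp hv
      exact hr2nn a
    have hub : ∀ v ∈ A.image r2, v ≤ (p:ℤ) - 1 := by
      intro v hv
      obtain ⟨a, _, rfl⟩ := Finset.mem_image.mp hv
      exact hr2ub a
    have := two_sum_ub (A.image r2) ((p:ℤ) - 1) h0 hub
    rw [Finset.sum_image hi, Finset.card_image_of_injOn hinj2] at this
    exact this
  have hsumd : (p:ℤ) * ∑ a ∈ A, (tmax a - tmin a) ≤ (A.card : ℤ) * ((L:ℤ) - A.card + 1) := by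
    have e : (p:ℤ) * ∑ a ∈ A, (tmax a - tmin a)
        = (A.card : ℤ) * ((L:ℤ) - ((p:ℤ) - 1)) - ∑ a ∈ A, r1 a + ∑ a ∈ A, r2 a := by
      rw [Finset.mul_sum, Finset.sum_congr rfl (fun a _ => hkey a)]
      rw [Finset.sum_add_distrib, Finset.sum_sub_distrib, Finset.sum_const, nsmul_eq_mul]
    nlinarith [hsum1, hsum2, e]
  -- per-child bound via IH
  have hchild : ∀ a ∈ A, ((F.filter (fun y => Dig p 0 y = a)).card : ℝ)
      ≤ (alph p q * ((tmax a - tmin a : ℤ) : ℝ) + 1) ^ expS p q := by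
    intro a ha
    set Fa := F.filter (fun y => Dig p 0 y = a) with hFa
    set Ga := Fa.image (Tl p) with hGa
    have hinjTl : Set.InjOn (Tl p) ↑Fa := by
      intro y hy z hz hyz
      have hy' := Finset.mem_filter.mp (Finset.mem_coe.mp hy)
      have hz' := Finset.mem_filter.mp (Finset.mem_coe.mp hz)
      have e1 := hdecomp y hy'.1 a hy'.2
      have e2 := hdecomp z hz'.1 a hz'.2
      rw [hyz] at e1
      omega
    have hcardG : Ga.card = Fa.card := Finset.card_image_of_injOn hinjTl
    have hd0 := htdiff a ha
    set La := (tmax a - tmin a).toNat with hLadef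
    have hLaeq : (La : ℤ) = tmax a - tmin a := Int.toNat_of_nonneg hd0
    have hLaL : La < L := by
      have h1 := hkey a
      have h2 : (p:ℤ) * (tmax a - tmin a) ≤ (L:ℤ) := by
        have := hr1nn a
        have := hr2ub a
        omega
      have h3 : 2 * (tmax a - tmin a) ≤ (p:ℤ) * (tmax a - tmin a) := by
        apply mul_le_mul_of_nonneg_right _ hd0
        exact_mod_cast hp2
      omega
    have hgood' := good_shift hp2 hS a
    have hsub : (↑Ga : Set ℤ) ⊆ Tl p '' {y | y ∈ S ∧ Dig p 0 y = a} := by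
      intro t ht
      obtain ⟨y, hyFa, rfl⟩ := Finset.mem_image.mp (Finset.mem_coe.mp ht)
      have hy' := Finset.mem_filter.mp hyFa
      exact ⟨y, ⟨hFS hy'.1, hy'.2⟩, rfl⟩
    have hbnd : ∀ t ∈ Ga, tmin a ≤ t ∧ t ≤ tmin a + La := by
      intro t ht
      obtain ⟨y, hyFa, rfl⟩ := Finset.mem_image.mp ht
      have hy' := Finset.mem_filter.mp hyFa
      have := htbound y hy'.1 a hy'.2
      omega
    have hIH := IH La hLaL _ hgood' (tmin a) Ga hsub hbnd
    rw [hcardG] at hIH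
    have hcast : ((La : ℕ) : ℝ) = ((tmax a - tmin a : ℤ) : ℝ) := by
      exact_mod_cast hLaeq
    rw [hcast] at hIH
    exact hIH
  -- assemble
  have hsum_real : (p:ℝ) * ∑ a ∈ A, ((tmax a - tmin a : ℤ) : ℝ)
      ≤ (A.card : ℝ) * (((L:ℤ) : ℝ) - A.card + 1) := by
    have := hsumd
    push_cast
    push_cast at this
    convert this using 2
    norm_cast
  have hfinal := analytic_step hq hqp hm1 hmq ((L:ℕ) : ℤ) (by exact_mod_cast hmL) A rfl
    (fun a => ((tmax a - tmin a : ℤ) : ℝ))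
    (fun a ha => by
      show (0:ℝ) ≤ ((tmax a - tmin a : ℤ) : ℝ)
      exact_mod_cast htdiff a ha) hsum_real
  calc (F.card : ℝ) = ∑ a ∈ A, ((F.filter (fun y => Dig p 0 y = a)).card : ℝ) := by
        exact_mod_cast hcardsum
    _ ≤ ∑ a ∈ A, (alph p q * ((tmax a - tmin a : ℤ) : ℝ) + 1) ^ expS p q :=
        Finset.sum_le_sum hchild
    _ ≤ (alph p q * ((L:ℕ):ℝ) + 1) ^ expS p q := by
        have hLc : ((((L:ℕ)):ℤ):ℝ) = ((L:ℕ):ℝ) := by norm_cast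
        rw [← hLc]
        exact hfinal



section Words

lemma wTake_length (I : List ℕ) (k : ℕ) : (wTake I k).length = k := by
  simp [wTake, List.length_take]

lemma wTake_ne_nil (I : List ℕ) {k : ℕ} (hk : 1 ≤ k) : wTake I k ≠ [] := by
  intro h
  have := wTake_length I k
  rw [h] at this
  simp at this
  omega

lemma wTake_mem {q : ℕ} (hq : 0 < q) {I : List ℕ} (hIq : ∀ i ∈ I, i < q) (k : ℕ) :
    ∀ i ∈ wTake I k, i < q := by
  intro i hi
  have h1 : i ∈ I ++ List.replicate k 0 := List.mem_of_mem_take hi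
  rcases List.mem_append.mp h1 with h | h
  · exact hIq i h
  · rw [List.eq_of_mem_replicate h]; exact hq

lemma wTake_getElem (I : List ℕ) (k j : ℕ) (hj : j < k) :
    (wTake I k)[j]'(by rw [wTake_length]; exact hj) = I.getD j 0 := by
  have hjlen : j < (I ++ List.replicate k 0).length := by
    simp [List.length_append]; omega
  simp only [wTake]
  rw [List.getElem_take]
  by_cases hI : j < I.length
  · rw [List.getElem_append_left hI, List.getD_eq_getElem I 0 hI]
  · rw [List.getElem_append_right (by omega), List.getElem_replicate,
      List.getD_eq_default I 0 (by omega)]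

lemma wTake_eq_of_getD (I J : List ℕ) (k : ℕ) (h : ∀ j, j < k → I.getD j 0 = J.getD j 0) :
    wTake I k = wTake J k := by
  apply List.ext_getElem
  · rw [wTake_length, wTake_length]
  · intro n h1 h2
    rw [wTake_length] at h1
    rw [wTake_getElem I k n h1, wTake_getElem J k n h1]
    exact h n h1

lemma wTake_getLast! (I : List ℕ) (k : ℕ) : (wTake I (k+1)).getLast! = I.getD k 0 := by
  have hlen : (wTake I (k+1)).length = k + 1 := wTake_length I (k+1)
  have hk : k < (wTake I (k+1)).length := by omega
  have h1 : (wTake I (k+1)).getLast? = some ((wTake I (k+1))[k]'hk) := by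
    rw [List.getLast?_eq_getElem?, hlen]
    simp only [Nat.add_sub_cancel]
    exact List.getElem?_eq_getElem hk
  rw [List.getLast!_of_getLast? h1, wTake_getElem I (k+1) k (by omega)]

lemma wTake_append (I : List ℕ) {k : ℕ} (hk : I.length ≤ k) :
    wTake I k = I ++ List.replicate (k - I.length) 0 := by
  rw [wTake, List.take_append, List.take_of_length_le hk, List.take_replicate]
  congr 1
  congr 1
  omega

lemma wTake_zeroword (k : ℕ) : wTake [0] (k+1) = List.replicate (k+1) 0 := by
  have h1 : ([0] : List ℕ) ++ List.replicate (k+1) 0 = List.replicate (k+2) 0 := by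
    rw [List.replicate_succ]; rfl
  rw [wTake, h1, List.take_replicate]
  congr 1
  omega

end Words

/-- the integer version of `Λ(τ)`. -/
def LamZ (p q : ℕ) (τ : List ℕ → ℤ) : Set ℤ :=
  {n | ∃ I : List ℕ, I ≠ [] ∧ (∀ i ∈ I, i < q) ∧ n = tauStar p τ I}

lemma tauStar_zeroword {p q : ℕ} (τ : List ℕ → ℤ) (hτ : IsRegularMap p q τ) :
    tauStar p τ [0] = 0 := by
  unfold tauStar
  have h : ∀ k : ℕ, τ (wTake [0] (k+1)) * (p:ℤ)^k = 0 := by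
    intro k
    rw [wTake_zeroword, hτ.1 (k+1) (by omega), zero_mul]
  rw [show (fun k : ℕ => τ (wTake [0] (k+1)) * (p:ℤ)^k) = fun _ => (0:ℤ) from funext h]
  exact finsum_zero

lemma dig_tauStar {p q : ℕ} (hp2 : 2 ≤ p) (hq0 : 0 < q) {τ : List ℕ → ℤ}
    (hτ : IsRegularMap p q τ) {I : List ℕ} (hne : I ≠ []) (hIq : ∀ i ∈ I, i < q) (j : ℕ) :
    Dig p j (tauStar p τ I) = τ (wTake I (j+1)) := by
  obtain ⟨N₀, hN₀⟩ := hτ.2.2 I hne hIq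
  set f : ℕ → ℤ := fun k => τ (wTake I (k+1)) with hf
  have hbd : ∀ k, -1 ≤ f k ∧ f k ≤ (p:ℤ) - 2 := by
    intro k
    have := hτ.2.1 (wTake I (k+1)) (wTake_ne_nil I (by omega)) (wTake_mem hq0 hIq (k+1))
    exact ⟨this.1, this.2.1⟩
  have hvan : ∀ k, I.length + N₀ ≤ k → f k = 0 := by
    intro k hk
    have hlen : I.length ≤ k + 1 := by omega
    rw [hf]
    simp only
    rw [wTake_append I hlen]
    exact hN₀ _ (by omega)
  have hts : tauStar p τ I = ∑ k ∈ Finset.range (I.length + N₀), f k * (p:ℤ)^k := by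
    apply finsum_eq_finset_sum_of_support_subset
    intro k hk
    simp only [Function.mem_support] at hk
    simp only [Finset.coe_range, Set.mem_Iio]
    by_contra hh
    push_neg at hh
    refine hk ?_
    have hv := hvan k hh
    simp only [hf] at hv
    rw [hv, zero_mul]
  rw [hts, dig_of_sum hp2 j f hbd _ hvan]

lemma dig_tauStar_res {p q : ℕ} (hp2 : 2 ≤ p) (hq0 : 0 < q) {τ : List ℕ → ℤ}
    (hτ : IsRegularMap p q τ) {I : List ℕ} (hne : I ≠ []) (hIq : ∀ i ∈ I, i < q) (j : ℕ) :
    Dig p j (tauStar p τ I) % (q:ℤ) = ((I.getD j 0 : ℕ) : ℤ) % q := by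
  rw [dig_tauStar hp2 hq0 hτ hne hIq j]
  have hdvd := (hτ.2.1 (wTake I (j+1)) (wTake_ne_nil I (by omega))
    (wTake_mem hq0 hIq (j+1))).2.2
  rw [wTake_getLast! I j] at hdvd
  exact Int.emod_eq_emod_iff_emod_sub_eq_zero.mpr (Int.emod_eq_zero_of_dvd hdvd)

lemma getD_lt {q : ℕ} {I : List ℕ} (hIq : ∀ i ∈ I, i < q) (hq0 : 0 < q) (i : ℕ) :
    I.getD i 0 < q := by
  by_cases h : i < I.length
  · exact hIq _ (by rw [List.getD_eq_getElem I 0 h]; exact List.getElem_mem _)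
  · rw [List.getD_eq_default I 0 (by omega)]; omega

lemma good_LamZ {p q : ℕ} (hp2 : 2 ≤ p) (hq2 : 2 ≤ q) {τ : List ℕ → ℤ}
    (hτ : IsRegularMap p q τ) : Good p q (LamZ p q τ) := by
  have hq0 : 0 < q := by omega
  rintro lam ⟨I, hI, hIq, rfl⟩ mu ⟨J, hJ, hJq, rfl⟩ j hres
  rw [dig_tauStar hp2 hq0 hτ hI hIq j, dig_tauStar hp2 hq0 hτ hJ hJq j]
  congr 1
  apply wTake_eq_of_getD
  intro i hi
  have h1 := hres i (by omega)
  rw [dig_tauStar_res hp2 hq0 hτ hI hIq i, dig_tauStar_res hp2 hq0 hτ hJ hJq i] at h1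
  have hIlt := getD_lt hIq hq0 i
  have hJlt := getD_lt hJq hq0 i
  rw [Int.emod_eq_of_lt (by positivity) (by exact_mod_cast hIlt),
    Int.emod_eq_of_lt (by positivity) (by exact_mod_cast hJlt)] at h1
  exact_mod_cast h1

lemma lambdaTau_eq {p q : ℕ} (hq2 : 2 ≤ q) (τ : List ℕ → ℤ) (hτ : IsRegularMap p q τ) :
    LambdaTau p q τ = (fun n : ℤ => (n : ℝ)) '' (LamZ p q τ) := by
  ext x
  constructor
  · rintro (⟨I, hI, hIq, rfl⟩ | hx)
    · exact ⟨tauStar p τ I, ⟨I, hI, hIq, rfl⟩, rfl⟩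
    · rw [Set.mem_singleton_iff] at hx
      subst hx
      refine ⟨0, ⟨[0], by simp, ?_, (tauStar_zeroword τ hτ).symm⟩, by simp⟩
      intro i hi
      simp at hi
      omega
  · rintro ⟨n, ⟨I, hI, hIq, rfl⟩, rfl⟩
    exact Or.inl ⟨I, hI, hIq, rfl⟩

/-- For every regular mapping `τ`, the upper `s`-Beurling density of the associated maximal
orthogonal set `Λ(τ)` satisfies `D_s^+(Λ(τ)) ≤ (2(p−1)/(q−1))^s`, where `s = log q / log p`. -/
theorem beurling_density_le_of_regular
    (p q : ℕ) (hq : 2 ≤ q) (hqp : q ≤ p) (hdvd : q ∣ p)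
    (τ : List ℕ → ℤ) (hτ : IsRegularMap p q τ) :
    beurlingDensityPlus (Real.log q / Real.log p) (LambdaTau p q τ) ≤
      ENNReal.ofReal ((2 * ((p : ℝ) - 1) / ((q : ℝ) - 1)) ^ (Real.log q / Real.log p)) := by
  have hp2 : 2 ≤ p := le_trans hq hqp
  have hα1 := alph_one_le hq hqp
  have hs0 := expS_pos hq hqp
  -- pointwise bound
  have key : ∀ h : ℝ, 1 ≤ h → ∀ x : ℝ,
      (((LambdaTau p q τ ∩ Set.Ioo (x - h) (x + h)).encard : ℝ≥0∞))
        ≤ ENNReal.ofReal ((2 * alph p q * h + 1) ^ expS p q) := by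
    intro h hh x
    set x₀ : ℤ := ⌊x - h⌋ + 1 with hx₀
    set L : ℕ := (⌈x + h⌉ - 1 - x₀).toNat with hLdef
    set T : Set ℤ := {n : ℤ | ((n:ℝ) ∈ Set.Ioo (x - h) (x + h)) ∧ n ∈ LamZ p q τ} with hT
    have hTbd : ∀ n ∈ T, x₀ ≤ n ∧ n ≤ x₀ + L := by
      intro n hn
      obtain ⟨⟨hn1, hn2⟩, _⟩ := hn
      have hfl : ⌊x - h⌋ < n := Int.floor_lt.mpr hn1
      have hcl : n < ⌈x + h⌉ := Int.lt_ceil.mpr hn2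
      have hge : (⌈x + h⌉ - 1 - x₀ : ℤ) ≤ (L : ℤ) := Int.self_le_toNat _
      omega
    have hTsub : T ⊆ Set.Icc x₀ (x₀ + L) := fun n hn => Set.mem_Icc.mpr (hTbd n hn)
    have hTfin : T.Finite := (Set.finite_Icc x₀ (x₀ + (L:ℤ))).subset hTsub
    have hFsub : (↑hTfin.toFinset : Set ℤ) ⊆ LamZ p q τ := by
      intro n hn
      exact (hTfin.mem_toFinset.mp hn).2
    have hFbd : ∀ n ∈ hTfin.toFinset, x₀ ≤ n ∧ n ≤ x₀ + L :=
      fun n hn => hTbd n (hTfin.mem_toFinset.mp hn)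
    have hcard := count_bound hq hqp L (LamZ p q τ) (good_LamZ hp2 hq hτ) x₀
      hTfin.toFinset hFsub hFbd
    have hhpos : (0:ℝ) < h := by linarith
    have hL2h : (L : ℝ) ≤ 2 * h := by
      rcases le_or_gt ((⌈x + h⌉ - 1 - x₀ : ℤ)) 0 with hneg | hpos
      · have hL0 : L = 0 := by omega
        rw [hL0]
        norm_num
        linarith
      · have hLe : (L:ℤ) = ⌈x + h⌉ - 1 - x₀ := Int.toNat_of_nonneg (by omega)
        have h1 : ((⌈x + h⌉:ℤ):ℝ) < x + h + 1 := Int.ceil_lt_add_one _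
        have h2 : x - h - 1 < ((⌊x - h⌋:ℤ):ℝ) := Int.sub_one_lt_floor _
        have h3 : ((L:ℤ):ℝ) < 2*h := by
          rw [hLe, hx₀]
          push_cast
          linarith
        exact_mod_cast le_of_lt h3
    have hmono : (alph p q * L + 1) ^ expS p q ≤ (2*alph p q*h + 1) ^ expS p q := by
      apply Real.rpow_le_rpow _ _ (le_of_lt hs0)
      · positivity
      · have hm : alph p q * L ≤ alph p q * (2*h) :=
          mul_le_mul_of_nonneg_left hL2h (by linarith)
        rw [show (2:ℝ)*alph p q*h = alph p q * (2*h) by ring]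
        linarith
    have him : LambdaTau p q τ ∩ Set.Ioo (x - h) (x + h) = (fun n : ℤ => (n:ℝ)) '' T := by
      rw [lambdaTau_eq hq τ hτ]
      ext y
      constructor
      · rintro ⟨⟨n, hn, rfl⟩, hy⟩
        exact ⟨n, ⟨hy, hn⟩, rfl⟩
      · rintro ⟨n, ⟨hy, hn⟩, rfl⟩
        exact ⟨⟨n, hn, rfl⟩, hy⟩
    rw [him]
    have hinj : Set.InjOn (fun n : ℤ => (n:ℝ)) T := fun a _ b _ hab => Int.cast_injective hab
    rw [hinj.encard_image, hTfin.encard_eq_coe_toFinset_card]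
    calc ((hTfin.toFinset.card : ℕ∞) : ℝ≥0∞)
        = ENNReal.ofReal ((hTfin.toFinset.card : ℝ)) := (ENNReal.ofReal_natCast _).symm
      _ ≤ ENNReal.ofReal ((2*alph p q*h + 1) ^ expS p q) :=
          ENNReal.ofReal_le_ofReal (le_trans hcard hmono)
  -- per-h sup bound
  have sup_bd : ∀ h : ℝ, 1 ≤ h →
      (⨆ x : ℝ, (((LambdaTau p q τ ∩ Set.Ioo (x - h) (x + h)).encard : ℝ≥0∞))
          / ENNReal.ofReal (h ^ (Real.log q / Real.log p)))
        ≤ ENNReal.ofReal ((2*alph p q + 1/h) ^ expS p q) := by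
    intro h hh
    apply iSup_le
    intro x
    have hb := key h hh x
    have hhpos : (0:ℝ) < h := by linarith
    have hpows : (0:ℝ) < h ^ expS p q := Real.rpow_pos_of_pos hhpos _
    calc (((LambdaTau p q τ ∩ Set.Ioo (x - h) (x + h)).encard : ℝ≥0∞))
          / ENNReal.ofReal (h ^ (Real.log q / Real.log p))
        ≤ ENNReal.ofReal ((2*alph p q*h + 1) ^ expS p q)
          / ENNReal.ofReal (h ^ expS p q) := ENNReal.div_le_div_right hb _
      _ = ENNReal.ofReal ((2*alph p q*h + 1) ^ expS p q / h ^ expS p q) :=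
          (ENNReal.ofReal_div_of_pos hpows).symm
      _ = ENNReal.ofReal ((2*alph p q + 1/h) ^ expS p q) := by
          rw [← Real.div_rpow (by positivity) (le_of_lt hhpos)]
          congr 2
          field_simp
  -- limsup
  unfold beurlingDensityPlus
  refine le_trans (Filter.limsup_le_limsup
    (v := fun h : ℝ => ENNReal.ofReal ((2*alph p q + 1/h) ^ expS p q)) ?_) ?_
  · filter_upwards [Filter.eventually_ge_atTop (1:ℝ)] with h hh
    exact sup_bd h hh
  · have h1 : Filter.Tendsto (fun h : ℝ => 2*alph p q + 1/h) Filter.atTop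
        (nhds (2*alph p q)) := by
      have h0 : Filter.Tendsto (fun h : ℝ => 1/h) Filter.atTop (nhds 0) := by
        simpa [one_div] using (tendsto_inv_atTop_zero (𝕜 := ℝ))
      simpa using h0.const_add (2*alph p q)
    have h2 : Filter.Tendsto (fun h : ℝ => (2*alph p q + 1/h) ^ expS p q) Filter.atTop
        (nhds ((2*alph p q) ^ expS p q)) :=
      ((Real.continuousAt_rpow_const _ _ (Or.inr (le_of_lt hs0))).tendsto).comp h1
    have h3 : Filter.Tendsto (fun h : ℝ => ENNReal.ofReal ((2*alph p q + 1/h) ^ expS p q))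
        Filter.atTop (nhds (ENNReal.ofReal ((2*alph p q) ^ expS p q))) :=
      (ENNReal.continuous_ofReal.continuousAt.tendsto).comp h2
    rw [h3.limsup_eq]
    apply le_of_eq
    have heq : (2 * alph p q) ^ expS p q
        = (2 * ((p:ℝ)-1)/((q:ℝ)-1)) ^ (Real.log (q:ℝ) / Real.log (p:ℝ)) := by
      rw [show (Real.log (q:ℝ) / Real.log (p:ℝ)) = expS p q from rfl]
      congr 1
      rw [alph]
      ring
    rw [heq]
end

section
/- Let k ≥ 1 and let a_1, …, a_k be integers with 0 ≤ a_i ≤ q−1 for all i and a_k ≥ 1. Then (Σ_{i=1}^k a_i q^{i−1}) / (Σ_{i=1}^k a_i p^{i−1})^s ≤ (q^k − 1) / ( ((q−1)/(p−1)) (p^k − 1) )^s. -/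
set_option maxHeartbeats 1000000
open Real Finset

lemma aux_L_le_Qu2 {Q P : ℝ} (hQ : 2 ≤ Q) (hP : 2*Q ≤ P) :
    Real.log Q ≤ Q * (Real.log P - Real.log Q)^2 := by
  have hQ0 : (0:ℝ) < Q := by linarith
  have hP0 : (0:ℝ) < P := by linarith
  have hu : Real.log 2 ≤ Real.log P - Real.log Q := by
    have h2 : (2:ℝ) ≤ P / Q := (le_div_iff₀ hQ0).2 (by linarith)
    have h3 := Real.log_le_log (by norm_num) h2
    rwa [Real.log_div (ne_of_gt hP0) (ne_of_gt hQ0)] at h3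
  have hLe : Real.log Q * Real.exp 1 ≤ Q := by
    have h := Real.log_le_sub_one_of_pos (x := Q / Real.exp 1) (by positivity)
    rw [Real.log_div (ne_of_gt hQ0) (Real.exp_ne_zero 1), Real.log_exp] at h
    have he : (0:ℝ) < Real.exp 1 := Real.exp_pos 1
    have h' : Real.log Q ≤ Q / Real.exp 1 := by linarith
    rw [le_div_iff₀ he] at h'
    exact h'
  have hl2 : (0.6931471803:ℝ) < Real.log 2 := Real.log_two_gt_d9
  have he9 : (2.7182818283:ℝ) < Real.exp 1 := Real.exp_one_gt_d9
  have hL0 : 0 < Real.log Q := Real.log_pos (by linarith)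
  have hu0 : (0.6931471803:ℝ) ≤ Real.log P - Real.log Q := by linarith
  have hsq : (0.6931471803:ℝ)^2 ≤ (Real.log P - Real.log Q)^2 := by nlinarith
  nlinarith [mul_le_mul_of_nonneg_left hsq hQ0.le]

lemma core_aux {Q P A B c d : ℝ} (hQ : 2 ≤ Q) (hP : 2*Q ≤ P) (hA : 0 < A) (hB : 0 < B)
    (hcA : Real.log A ≤ Real.log Q + c) (hdB : Real.log P - d ≤ Real.log B)
    (hcd : c + d ≤ 1/Q) :
    A * (Q-1) ^ (1 - Real.log Q / Real.log P) ≤ B := by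
  have hQ0 : (0:ℝ) < Q := by linarith
  have hP0 : (0:ℝ) < P := by linarith
  have hQ1 : (0:ℝ) < Q - 1 := by linarith
  have hL0 : 0 < Real.log Q := Real.log_pos (by linarith)
  have hPl0 : 0 < Real.log P := Real.log_pos (by linarith)
  have hLP : Real.log Q < Real.log P := Real.log_lt_log hQ0 (by linarith)
  set L := Real.log Q with hLdef
  set Pl := Real.log P with hPldef
  set u := Pl - L with hudef
  have hu0 : 0 < u := by simp only [hudef]; linarith
  have h1s : 1 - L / Pl = u / Pl := by field_simp; exact hudef.symm
  have hlogQm1 : Real.log (Q-1) ≤ L - 1/Q := by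
    have h := Real.log_le_sub_one_of_pos (x := (Q-1)/Q) (by positivity)
    rw [Real.log_div (ne_of_gt hQ1) (ne_of_gt hQ0)] at h
    have he : (Q-1)/Q - 1 = -(1/Q) := by field_simp; ring
    rw [he] at h; linarith
  have hlogQm1' : 0 ≤ Real.log (Q-1) := Real.log_nonneg (by linarith)
  have key : L ≤ Q * u^2 := aux_L_le_Qu2 hQ hP
  have hLQ : L/Q ≤ u^2 := by rw [div_le_iff₀ hQ0]; linarith [key]
  rw [← Real.log_le_log_iff (by positivity) hB]
  rw [Real.log_mul (ne_of_gt hA) (ne_of_gt (Real.rpow_pos_of_pos hQ1 _)),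
    Real.log_rpow hQ1, h1s]
  have hfrac0 : 0 ≤ u / Pl := by positivity
  have step1 : u / Pl * Real.log (Q-1) ≤ u / Pl * (L - 1/Q) :=
    mul_le_mul_of_nonneg_left hlogQm1 hfrac0
  have hPlu : Pl = L + u := by simp [hudef]
  have step2 : u / Pl * (L - 1/Q) ≤ u - 1/Q := by
    rw [div_mul_eq_mul_div, div_le_iff₀ hPl0, hPlu]
    have expand : (u - 1/Q) * (L + u) - u * (L - 1/Q) = u^2 - L/Q := by ring
    nlinarith [hLQ]
  linarith

lemma core1 {Q P : ℝ} (hQ : 2 ≤ Q) (hP : 2*Q ≤ P) :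
    (Q+1) * (Q-1) ^ (1 - Real.log Q / Real.log P) ≤ P := by
  have hQ0 : (0:ℝ) < Q := by linarith
  refine core_aux (c := 1/Q) (d := 0) hQ hP (by linarith) (by linarith) ?_ (by simp) (by simp)
  have h := Real.log_le_sub_one_of_pos (x := (Q+1)/Q) (by positivity)
  rw [Real.log_div (by positivity) (ne_of_gt hQ0)] at h
  have he : (Q+1)/Q - 1 = 1/Q := by field_simp; ring
  rw [he] at h; linarith

lemma core2 {Q P : ℝ} (hQ : 2 ≤ Q) (hP : 2*Q ≤ P) :
    (Q + 1/(Q+1)) * (Q-1) ^ (1 - Real.log Q / Real.log P) ≤ P - 1 := by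
  have hQ0 : (0:ℝ) < Q := by linarith
  have hQ10 : (0:ℝ) < Q + 1 := by linarith
  have hP1 : (0:ℝ) < P - 1 := by linarith
  have hP0 : (0:ℝ) < P := by linarith
  refine core_aux (c := 1/(Q*(Q+1))) (d := 1/(P-1)) hQ hP (by positivity) hP1 ?_ ?_ ?_
  · have h := Real.log_le_sub_one_of_pos (x := (Q + 1/(Q+1))/Q) (by positivity)
    rw [Real.log_div (by positivity) (ne_of_gt hQ0)] at h
    have he : (Q + 1/(Q+1))/Q - 1 = 1/(Q*(Q+1)) := by field_simp; ring
    rw [he] at h; linarith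
  · have h := Real.log_le_sub_one_of_pos (x := P/(P-1)) (div_pos hP0 hP1)
    rw [Real.log_div (ne_of_gt hP0) (ne_of_gt hP1)] at h
    have he : P/(P-1) - 1 = 1/(P-1) := by field_simp; ring
    rw [he] at h; linarith
  · have h1 : 1/(P-1) ≤ 1/(2*Q-1) := by
      apply one_div_le_one_div_of_le (by linarith) (by linarith)
    have h2 : 1/(Q*(Q+1)) + 1/(2*Q-1) ≤ 1/Q := by
      rw [div_add_div _ _ (ne_of_gt (by positivity)) (ne_of_gt (by linarith : (0:ℝ) < 2*Q-1)),
        div_le_div_iff₀ (mul_pos (mul_pos hQ0 hQ10) (by linarith : (0:ℝ) < 2*Q-1)) hQ0]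
      nlinarith [sq_nonneg Q]
    linarith

lemma geo_cmp {Q P : ℝ} (h1 : 1 ≤ Q) (h2 : Q ≤ P) (k : ℕ) :
    (Q^k - 1) * (P - 1) ≤ (P^k - 1) * (Q - 1) := by
  induction k with
  | zero => simp
  | succ k ih =>
    have hQ0 : (0:ℝ) ≤ Q := by linarith
    have hPk : (1:ℝ) ≤ P^k := one_le_pow₀ (by linarith)
    have hQk : (1:ℝ) ≤ Q^k := one_le_pow₀ h1
    have h3 : Q*((Q^k - 1)*(P - 1)) ≤ Q*((P^k - 1)*(Q - 1)) :=
      mul_le_mul_of_nonneg_left ih hQ0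
    have h4 : Q*((P^k - 1)*(Q - 1)) ≤ P*((P^k - 1)*(Q - 1)) := by
      apply mul_le_mul_of_nonneg_right h2
      nlinarith
    rw [pow_succ, pow_succ]
    nlinarith [h3, h4]

lemma bern_tangent {v w s : ℝ} (hv : 0 < v) (hw : 0 ≤ w) (hs0 : 0 ≤ s) (hs1 : s ≤ 1) :
    w ^ s * v ≤ v ^ s * (v + s * (w - v)) := by
  have h := rpow_one_add_le_one_add_mul_self (s := w/v - 1) (by
      have : 0 ≤ w/v := div_nonneg hw hv.le
      linarith) hs0 hs1
  have he : (1 : ℝ) + (w/v - 1) = w/v := by ring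
  rw [he] at h
  have h3 : (w/v) ^ s = w^s / v^s := Real.div_rpow hw hv.le s
  rw [h3] at h
  have hvs : 0 < v^s := Real.rpow_pos_of_pos hv s
  rw [div_le_iff₀ hvs] at h
  have h4 : w^s * v ≤ (1 + s*(w/v - 1)) * v^s * v :=
    mul_le_mul_of_nonneg_right h hv.le
  calc w^s * v ≤ (1 + s*(w/v - 1)) * v^s * v := h4
    _ = v^s * ((1 + s*(w/v-1)) * v) := by ring
    _ = v^s * (v + s*(w - v)) := by
        have hv' : v ≠ 0 := ne_of_gt hv
        field_simp

lemma conc_two {c d θ s : ℝ} (hc : 0 ≤ c) (hd : 0 ≤ d) (hθ0 : 0 ≤ θ) (hθ1 : θ ≤ 1)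
    (hs0 : 0 ≤ s) (hs1 : s ≤ 1) :
    (1-θ) * c^s + θ * d^s ≤ ((1-θ)*c + θ*d) ^ s := by
  have h := (Real.concaveOn_rpow hs0 hs1).2 (Set.mem_Ici.2 hc) (Set.mem_Ici.2 hd)
    (by linarith : 0 ≤ 1 - θ) hθ0 (by ring)
  simpa [smul_eq_mul] using h

lemma s_facts {Q P : ℝ} (hQ : 2 ≤ Q) (hP : 2*Q ≤ P) :
    0 < Real.log Q / Real.log P ∧ Real.log Q / Real.log P < 1 ∧ P ^ (Real.log Q / Real.log P) = Q := by
  have hQ1 : (1:ℝ) < Q := by linarith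
  have hP1 : (1:ℝ) < P := by linarith
  refine ⟨div_pos (Real.log_pos hQ1) (Real.log_pos hP1),
    (div_lt_one (Real.log_pos hP1)).2 (Real.log_lt_log (by linarith) (by linarith)), ?_⟩
  rw [← Real.logb]; exact Real.rpow_logb (by linarith) (ne_of_gt hP1) (by linarith)

lemma lemA_abs {Q P s' pk qk : ℝ} (hQ1 : 1 < Q) (hP1 : 1 < P) (hQP : Q ≤ P)
    (hs0 : 0 < s') (hs1 : s' ≤ 1) (hPs : P ^ s' = Q) (hqk : 1 ≤ qk) (hpk : 1 < pk)
    (geo : (qk - 1) * (P - 1) ≤ (pk - 1) * (Q - 1)) :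
    (qk - 1) * ((Q-1)*(pk*P-1)/(P-1)) ^ s' ≤ (qk*Q - 1) * ((Q-1)*(pk-1)/(P-1)) ^ s' := by
  have hP0 : (0:ℝ) < P := by linarith
  have hQ0 : (0:ℝ) < Q := by linarith
  have hpk0 : (0:ℝ) < pk - 1 := by linarith
  have hden : (0:ℝ) < P - 1 := by linarith
  have hpkP : (1:ℝ) < pk * P := by nlinarith
  set c := (Q-1)*(pk-1)/(P-1) with hc
  have hc0 : 0 < c := div_pos (mul_pos (by linarith) hpk0) hden
  set r := (pk*P-1)/(pk-1) with hr
  have hr0 : 0 < r := div_pos (by linarith) hpk0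
  have hcr : (Q-1)*(pk*P-1)/(P-1) = c * r := by
    rw [hc, hr]; field_simp
  have hrP : P ≤ r := by
    rw [hr, le_div_iff₀ hpk0]; nlinarith
  have hrP1 : 1 ≤ r / P := (one_le_div hP0).2 hrP
  have hrs : r ^ s' ≤ Q * (r/P) := by
    have h1 : r = P * (r/P) := (mul_div_cancel₀ r (ne_of_gt hP0)).symm
    calc r ^ s' = (P * (r/P)) ^ s' := by rw [← h1]
      _ = P ^ s' * (r/P) ^ s' := Real.mul_rpow hP0.le (by positivity)
      _ = Q * (r/P) ^ s' := by rw [hPs]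
      _ ≤ Q * (r/P) := by
          apply mul_le_mul_of_nonneg_left _ hQ0.le
          calc (r/P) ^ s' ≤ (r/P) ^ (1:ℝ) := Real.rpow_le_rpow_of_exponent_le hrP1 hs1
            _ = r/P := Real.rpow_one _
  have e1 : Q*((qk-1)*(P-1)) ≤ Q*((pk-1)*(Q-1)) := mul_le_mul_of_nonneg_left geo hQ0.le
  have e2 : Q*((pk-1)*(Q-1)) ≤ P*((pk-1)*(Q-1)) :=
    mul_le_mul_of_nonneg_right hQP (by nlinarith)
  have key2 : (qk-1)*Q*(pk*P-1) ≤ (qk*Q-1)*(P*(pk-1)) := by nlinarith [e1, e2]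
  have key : (qk-1)*(Q*r) ≤ (qk*Q-1)*P := by
    have h2 : (qk-1)*(Q*r) = ((qk-1)*Q*(pk*P-1))/(pk-1) := by rw [hr]; ring
    rw [h2, div_le_iff₀ hpk0]
    nlinarith [key2]
  have h5 : (qk-1)*(r^s') ≤ qk*Q-1 := by
    have h6 : (qk-1)*(r^s') ≤ (qk-1)*(Q*(r/P)) :=
      mul_le_mul_of_nonneg_left hrs (by linarith)
    have h7 : (qk-1)*(Q*(r/P)) ≤ qk*Q-1 := by
      have h8 : (qk-1)*(Q*(r/P)) = ((qk-1)*(Q*r))/P := by ring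
      rw [h8, div_le_iff₀ hP0]
      exact key
    linarith
  calc (qk - 1) * ((Q-1)*(pk*P-1)/(P-1)) ^ s'
      = (qk - 1) * (c^s' * r^s') := by rw [hcr, Real.mul_rpow hc0.le hr0.le]
    _ = c^s' * ((qk-1) * r^s') := by ring
    _ ≤ c^s' * (qk*Q-1) := mul_le_mul_of_nonneg_left h5 (Real.rpow_nonneg hc0.le _)
    _ = (qk*Q - 1) * c ^ s' := by ring

lemma lemB1core {Q P : ℝ} (hQ : 2 ≤ Q) (hP : 2*Q ≤ P)
    (hs0 : 0 ≤ Real.log Q / Real.log P) (hs1 : Real.log Q / Real.log P ≤ 1)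
    (hPs : P ^ (Real.log Q / Real.log P) = Q) :
    (Q*Q - 1) * Q ≤ P * ((Q-1)*(P+1)) ^ (Real.log Q / Real.log P) := by
  set s' := Real.log Q / Real.log P with hs'def
  have hP0 : (0:ℝ) < P := by linarith
  have hQ0 : (0:ℝ) < Q := by linarith
  have hQ1 : (0:ℝ) < Q - 1 := by linarith
  set R := (Q-1)*(P+1)/P with hRdef
  have hR0 : 0 < R := by positivity
  have hfac : (Q-1)*(P+1) = P * R := by rw [hRdef]; field_simp
  have hsplit : R ^ s' * R ^ (1-s') = R := by
    rw [← Real.rpow_add hR0]; norm_num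
  have hPP1 : (1:ℝ) ≤ (P+1)/P := by rw [le_div_iff₀ hP0]; linarith
  have hR1s : R ^ (1-s') ≤ (Q-1) ^ (1-s') * ((P+1)/P) := by
    have h1 : R = (Q-1) * ((P+1)/P) := by rw [hRdef]; ring
    calc R ^ (1-s') = (Q-1) ^ (1-s') * ((P+1)/P) ^ (1-s') := by
          rw [h1, Real.mul_rpow hQ1.le (by positivity)]
      _ ≤ (Q-1) ^ (1-s') * ((P+1)/P) := by
          apply mul_le_mul_of_nonneg_left _ (Real.rpow_nonneg hQ1.le _)
          calc ((P+1)/P) ^ (1-s') ≤ ((P+1)/P) ^ (1:ℝ) :=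
                Real.rpow_le_rpow_of_exponent_le hPP1 (by linarith [hs0])
            _ = (P+1)/P := Real.rpow_one _
  have main : (Q*Q-1) * R ^ (1-s') ≤ P * R := by
    calc (Q*Q-1) * R ^ (1-s') ≤ (Q*Q-1) * ((Q-1) ^ (1-s') * ((P+1)/P)) :=
          mul_le_mul_of_nonneg_left hR1s (by nlinarith)
      _ = ((Q+1) * (Q-1) ^ (1-s')) * ((Q-1)*(P+1)/P) := by ring
      _ ≤ P * ((Q-1)*(P+1)/P) := mul_le_mul_of_nonneg_right (core1 hQ hP) (by positivity)
      _ = P * R := by rw [hRdef]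
  have step : (Q*Q-1) ≤ P * R ^ s' := by
    have h2 : (Q*Q-1) * R ^ (1-s') ≤ (P * R ^ s') * R ^ (1-s') := by
      calc (Q*Q-1) * R ^ (1-s') ≤ P * R := main
        _ = P * (R ^ s' * R ^ (1-s')) := by rw [hsplit]
        _ = (P * R ^ s') * R ^ (1-s') := by ring
    exact le_of_mul_le_mul_right h2 (Real.rpow_pos_of_pos hR0 _)
  calc (Q*Q - 1) * Q ≤ (P * R ^ s') * Q := mul_le_mul_of_nonneg_right step hQ0.le
    _ = P * (Q * R ^ s') := by ring
    _ = P * (P ^ s' * R ^ s') := by rw [hPs]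
    _ = P * ((P*R) ^ s') := by rw [Real.mul_rpow hP0.le hR0.le]
    _ = P * ((Q-1)*(P+1)) ^ s' := by rw [← hfac]

lemma lemB2_abs {Q P pk qk : ℝ} (hQ : 2 ≤ Q) (hP : 2*Q ≤ P)
    (hs0 : 0 ≤ Real.log Q / Real.log P) (hs1 : Real.log Q / Real.log P ≤ 1)
    (hpk : 1 < pk) (hqk2 : Q*Q ≤ qk)
    (hPsk : pk ^ (Real.log Q / Real.log P) = qk) :
    (qk*Q - 1) * qk * ((Q-1)*(pk-1)/(P-1)) ≤ (qk - 1) * pk * ((Q-1)*(pk*P-1)/(P-1)) ^ (Real.log Q / Real.log P) := by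
  set s' := Real.log Q / Real.log P with hs'def
  have hP0 : (0:ℝ) < P := by linarith
  have hQ0 : (0:ℝ) < Q := by linarith
  have hQm1 : (0:ℝ) < Q - 1 := by linarith
  have hPm1 : (0:ℝ) < P - 1 := by linarith
  have hpk0 : (0:ℝ) < pk := by linarith
  have hqk1 : (1:ℝ) < qk := by nlinarith
  have hpkP : (1:ℝ) < pk*P := by nlinarith
  set R := (Q-1)*(pk*P-1)/((P-1)*pk) with hRdef
  have hR0 : 0 < R := by
    apply div_pos (mul_pos hQm1 (by linarith)) (mul_pos hPm1 hpk0)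
  have hCR : (Q-1)*(pk*P-1)/(P-1) = pk * R := by
    rw [hRdef]; field_simp
  have hC1s : ((Q-1)*(pk*P-1)/(P-1)) ^ s' = qk * R ^ s' := by
    rw [hCR, Real.mul_rpow hpk0.le hR0.le, hPsk]
  -- C_k ≤ pk * R / P
  have hCkle : (Q-1)*(pk-1)/(P-1) ≤ pk * R / P := by
    have h1 : pk * R / P = (Q-1)*(pk*P-1)/((P-1)*P) := by
      rw [hRdef]; field_simp
    rw [h1, div_le_div_iff₀ hPm1 (mul_pos hPm1 hP0)]
    nlinarith [mul_le_mul_of_nonneg_left (show (pk-1)*P ≤ pk*P-1 by nlinarith)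
      (mul_nonneg hQm1.le hPm1.le)]
  -- R ≤ (Q-1)*(P/(P-1))
  have hRle : R ≤ (Q-1)*(P/(P-1)) := by
    rw [hRdef, div_le_iff₀ (mul_pos hPm1 hpk0)]
    have h2 : (Q-1)*(P/(P-1))*((P-1)*pk) = (Q-1)*(P*pk) := by field_simp
    rw [h2]
    nlinarith
  have hsplit : R ^ s' * R ^ (1-s') = R := by
    rw [← Real.rpow_add hR0]; norm_num
  have hPP1 : (1:ℝ) ≤ P/(P-1) := by rw [le_div_iff₀ hPm1]; linarith
  have hR1s : R ^ (1-s') ≤ (Q-1) ^ (1-s') * (P/(P-1)) := by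
    calc R ^ (1-s') ≤ ((Q-1)*(P/(P-1))) ^ (1-s') :=
          Real.rpow_le_rpow hR0.le hRle (by linarith)
      _ = (Q-1) ^ (1-s') * (P/(P-1)) ^ (1-s') :=
          Real.mul_rpow hQm1.le (by positivity)
      _ ≤ (Q-1) ^ (1-s') * (P/(P-1)) := by
          apply mul_le_mul_of_nonneg_left _ (Real.rpow_nonneg hQm1.le _)
          calc (P/(P-1)) ^ (1-s') ≤ (P/(P-1)) ^ (1:ℝ) :=
                Real.rpow_le_rpow_of_exponent_le hPP1 (by linarith)
            _ = P/(P-1) := Real.rpow_one _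
  have hMle : qk*Q - 1 ≤ (Q + 1/(Q+1)) * (qk - 1) := by
    have h3 : (Q + 1/(Q+1)) * (qk - 1) = ((Q*(Q+1)+1)*(qk-1))/(Q+1) := by
      field_simp
    rw [h3, le_div_iff₀ (by linarith : (0:ℝ) < Q+1)]
    nlinarith
  have hkey : (qk*Q - 1) * R ^ (1-s') ≤ (qk - 1) * P := by
    have hQfrac : 0 ≤ Q + 1/(Q+1) := by positivity
    calc (qk*Q - 1) * R ^ (1-s') ≤ ((Q + 1/(Q+1)) * (qk - 1)) * R ^ (1-s') :=
          mul_le_mul_of_nonneg_right hMle (Real.rpow_nonneg hR0.le _)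
      _ ≤ ((Q + 1/(Q+1)) * (qk - 1)) * ((Q-1) ^ (1-s') * (P/(P-1))) := by
          apply mul_le_mul_of_nonneg_left hR1s
          exact mul_nonneg hQfrac (by linarith)
      _ = ((Q + 1/(Q+1)) * (Q-1) ^ (1-s')) * ((qk-1) * (P/(P-1))) := by ring
      _ ≤ (P - 1) * ((qk-1) * (P/(P-1))) := by
          apply mul_le_mul_of_nonneg_right (core2 hQ hP)
          exact mul_nonneg (by linarith) (by positivity)
      _ = (qk - 1) * P := by field_simp
  have hstep : (qk*Q - 1) * R ≤ (qk - 1) * P * R ^ s' := by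
    calc (qk*Q - 1) * R = ((qk*Q - 1) * R ^ (1-s')) * R ^ s' := by
          rw [mul_assoc, mul_comm (R ^ (1-s')) (R ^ s'), hsplit]
      _ ≤ ((qk - 1) * P) * R ^ s' :=
          mul_le_mul_of_nonneg_right hkey (Real.rpow_nonneg hR0.le _)
  calc (qk*Q - 1) * qk * ((Q-1)*(pk-1)/(P-1))
      ≤ (qk*Q - 1) * qk * (pk * R / P) := by
        apply mul_le_mul_of_nonneg_left hCkle
        have hqkQ1 : (1:ℝ) < qk*Q := one_lt_mul hqk1.le (by linarith)
        exact mul_nonneg (by linarith) (by linarith)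
    _ = (qk * pk / P) * ((qk*Q - 1) * R) := by ring
    _ ≤ (qk * pk / P) * ((qk - 1) * P * R ^ s') := by
        apply mul_le_mul_of_nonneg_left hstep
        positivity
    _ = (qk - 1) * pk * (qk * R ^ s') := by field_simp
    _ = (qk - 1) * pk * ((Q-1)*(pk*P-1)/(P-1)) ^ s' := by rw [hC1s]

lemma main_ind {Q P : ℝ} (hQ : 2 ≤ Q) (hP : 2*Q ≤ P) (a : ℕ → ℝ) (k : ℕ)
    (ha : ∀ i, i < k → (a i = 0 ∨ 1 ≤ a i) ∧ a i ≤ Q - 1) :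
    (∑ i ∈ range k, a i * Q^i) * ((Q-1)*(P^k-1)/(P-1)) ^ (Real.log Q / Real.log P)
      ≤ (Q^k - 1) * (∑ i ∈ range k, a i * P^i) ^ (Real.log Q / Real.log P) := by
  obtain ⟨hs0, hs1, hPs⟩ := s_facts hQ hP
  set s' := Real.log Q / Real.log P with hs'def
  have hQ1 : (1:ℝ) < Q := by linarith
  have hP1 : (1:ℝ) < P := by linarith
  have hQ0 : (0:ℝ) < Q := by linarith
  have hP0 : (0:ℝ) < P := by linarith
  have hQm1 : (0:ℝ) < Q - 1 := by linarith
  have hPm1 : (0:ℝ) < P - 1 := by linarith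
  induction k with
  | zero =>
    simp [Real.zero_rpow (ne_of_gt hs0)]
  | succ k ih =>
    have ha' : ∀ i, i < k → (a i = 0 ∨ 1 ≤ a i) ∧ a i ≤ Q - 1 :=
      fun i hi => ha i (by omega)
    have IH := ih ha'
    have ha0 : ∀ i, i < k + 1 → 0 ≤ a i := by
      intro i hi
      rcases (ha i hi).1 with h | h
      · exact h.ge
      · linarith
    set N' := ∑ i ∈ range k, a i * Q^i with hN'def
    set x := ∑ i ∈ range k, a i * P^i with hxdef
    set b := a k with hbdef
    have hN'0 : 0 ≤ N' := sum_nonneg fun i hi =>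
      mul_nonneg (ha0 i (by have := mem_range.mp hi; omega)) (pow_nonneg hQ0.le i)
    have hx0 : 0 ≤ x := sum_nonneg fun i hi =>
      mul_nonneg (ha0 i (by have := mem_range.mp hi; omega)) (pow_nonneg hP0.le i)
    have hble : b ≤ Q - 1 := (ha k (by omega)).2
    have hbint : b = 0 ∨ 1 ≤ b := (ha k (by omega)).1
    have hb0 : 0 ≤ b := ha0 k (by omega)
    set X := (Q-1)*(P^k-1)/(P-1) with hXdef
    have hxle : x ≤ X := by
      rw [hxdef, hXdef]
      calc ∑ i ∈ range k, a i * P^i ≤ ∑ i ∈ range k, (Q-1) * P^i := by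
            apply sum_le_sum
            intro i hi
            exact mul_le_mul_of_nonneg_right ((ha i (by have := mem_range.mp hi; omega)).2)
              (pow_nonneg hP0.le i)
        _ = (Q-1) * ((P^k-1)/(P-1)) := by
            rw [← mul_sum, geom_sum_eq (by linarith : P ≠ 1)]
        _ = (Q-1)*(P^k-1)/(P-1) := by ring
    rw [sum_range_succ, sum_range_succ, ← hN'def, ← hxdef, ← hbdef]
    rcases Nat.eq_zero_or_pos k with rfl | hk1
    · -- base : k = 0
      have hN0 : N' = 0 := by rw [hN'def]; simp
      have hx00 : x = 0 := by rw [hxdef]; simp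
      rw [hN0, hx00]
      simp only [zero_add, pow_zero, mul_one, pow_one]
      have hC1 : (Q-1)*(P-1)/(P-1) = Q - 1 := by field_simp
      rw [hC1]
      rcases hbint with h | h
      · rw [h, Real.zero_rpow (ne_of_gt hs0)]
        simp
      · have hbpos : (0:ℝ) < b := by linarith
        have e1 : b = b^(1-s') * b^s' := by
          rw [← Real.rpow_add hbpos]; norm_num
        have e2 : Q - 1 = (Q-1)^(1-s') * (Q-1)^s' := by
          rw [← Real.rpow_add hQm1]; norm_num
        calc b * (Q-1)^s' = (b^(1-s') * b^s') * (Q-1)^s' := by rw [← e1]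
          _ ≤ ((Q-1)^(1-s') * b^s') * (Q-1)^s' := by
              apply mul_le_mul_of_nonneg_right _ (Real.rpow_nonneg hQm1.le _)
              apply mul_le_mul_of_nonneg_right _ (Real.rpow_nonneg hbpos.le _)
              exact Real.rpow_le_rpow hbpos.le hble (by linarith)
          _ = ((Q-1)^(1-s') * (Q-1)^s') * b^s' := by ring
          _ = (Q - 1) * b^s' := by rw [← e2]
    · -- step : k ≥ 1
      have hPk1 : (1:ℝ) < P^k := one_lt_pow₀ hP1 (by omega)
      have hQk1 : (1:ℝ) < Q^k := one_lt_pow₀ hQ1 (by omega)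
      have hQk1Q : (1:ℝ) < Q^k*Q := one_lt_mul hQk1.le hQ1
      have hX0 : 0 < X := by
        rw [hXdef]; exact div_pos (mul_pos hQm1 (by linarith)) hPm1
      have hXs0 : 0 < X ^ s' := Real.rpow_pos_of_pos hX0 _
      have hPsk : (P^k) ^ s' = Q^k := by
        rw [← Real.rpow_natCast P k, ← Real.rpow_mul hP0.le]
        have hcomm : (k:ℝ) * s' = s' * (k:ℝ) := mul_comm _ _
        rw [hcomm, Real.rpow_mul hP0.le, hPs, Real.rpow_natCast]
      have geo := geo_cmp (le_of_lt hQ1) (by linarith : Q ≤ P) k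
      have lemA := lemA_abs (pk := P^k) (qk := Q^k) hQ1 hP1 (by linarith) hs0 hs1.le hPs hQk1.le hPk1 geo
      rw [← hXdef] at lemA
      rw [pow_succ P, pow_succ Q]
      set Ck1 := (Q-1)*(P^k*P-1)/(P-1) with hCk1def
      have hPkP1 : (1:ℝ) < P^k*P := one_lt_mul hPk1.le hP1
      have hCk1pos : 0 < Ck1 := by
        rw [hCk1def]
        have h9 : (0:ℝ) < P^k*P-1 := by linarith
        positivity
      have hCk1s0 : (0:ℝ) ≤ Ck1 ^ s' := Real.rpow_nonneg hCk1pos.le _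
      rcases hbint with hb | hb
      · -- b = 0
        rw [hb]
        simp only [zero_mul, add_zero]
        have g3 : N' * Ck1^s' * (Q^k - 1) ≤ (Q^k*Q - 1) * x^s' * (Q^k - 1) := by
          calc N' * Ck1^s' * (Q^k - 1) = N' * ((Q^k - 1) * Ck1^s') := by ring
            _ ≤ N' * ((Q^k*Q - 1) * X^s') := mul_le_mul_of_nonneg_left lemA hN'0
            _ = (N' * X^s') * (Q^k*Q - 1) := by ring
            _ ≤ ((Q^k - 1) * x^s') * (Q^k*Q - 1) :=
                mul_le_mul_of_nonneg_right IH (by linarith)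
            _ = (Q^k*Q - 1) * x^s' * (Q^k - 1) := by ring
        exact le_of_mul_le_mul_right g3 (by linarith)
      · -- 1 ≤ b
        set B := b * P^k with hBdef
        set W := x + B with hWdef
        set V := X + B with hVdef
        have hPkpos : (0:ℝ) < P^k := by linarith
        have hBP : P^k ≤ B := by
          rw [hBdef]
          calc P^k = 1*P^k := (one_mul _).symm
            _ ≤ b*P^k := mul_le_mul_of_nonneg_right hb hPkpos.le
        have hW0 : 0 < W := by rw [hWdef]; linarith
        have hPkW : P^k ≤ W := by rw [hWdef]; linarith
        have hWV : W ≤ V := by rw [hWdef, hVdef]; linarith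
        have hV0 : 0 < V := by linarith
        have hc4 : Ck1^s' * ((Q^k - 1) + b * Q^k) ≤ (Q^k*Q - 1) * V^s' := by
          set θ := b / (Q-1) with hθdef
          have hθ0 : 0 ≤ θ := div_nonneg hb0 hQm1.le
          have hθ1 : θ ≤ 1 := (div_le_one hQm1).2 hble
          have hθb : θ * (Q-1) = b := div_mul_cancel₀ b (ne_of_gt hQm1)
          have hCk1X : Ck1 = X + (Q-1) * P^k := by
            rw [hCk1def, hXdef]; field_simp; ring
          have hVcomb : V = (1-θ)*X + θ*Ck1 := by
            rw [hVdef, hCk1X, hBdef]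
            have h8 : (1-θ)*X + θ*(X + (Q-1)*P^k) = X + (θ*(Q-1))*P^k := by ring
            rw [h8, hθb]
          have hconc := conc_two hX0.le hCk1pos.le hθ0 hθ1 hs0.le hs1.le
          rw [← hVcomb] at hconc
          have hMk1V : (Q^k*Q-1) * ((1-θ)*X^s' + θ*Ck1^s') ≤ (Q^k*Q - 1) * V^s' :=
            mul_le_mul_of_nonneg_left hconc (by linarith)
          have hA2 : (1-θ) * ((Q^k-1) * Ck1^s') ≤ (1-θ) * ((Q^k*Q-1) * X^s') :=
            mul_le_mul_of_nonneg_left lemA (by linarith)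
          have hexp : Ck1^s' * ((Q^k - 1) + b*Q^k) =
              (1-θ)*((Q^k-1) * Ck1^s') + θ*((Q^k*Q-1)*Ck1^s') := by
            have hb' : b = θ * (Q-1) := hθb.symm
            rw [hb']; ring
          calc Ck1^s' * ((Q^k - 1) + b * Q^k)
              = (1-θ)*((Q^k-1) * Ck1^s') + θ*((Q^k*Q-1)*Ck1^s') := hexp
            _ ≤ (1-θ)*((Q^k*Q-1) * X^s') + θ*((Q^k*Q-1)*Ck1^s') := by linarith [hA2]
            _ = (Q^k*Q-1) * ((1-θ)*X^s' + θ*Ck1^s') := by ring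
            _ ≤ (Q^k*Q - 1) * V^s' := hMk1V
        have hBcomb : (Q^k*Q - 1) * Q^k * X ≤ (Q^k - 1) * P^k * Ck1^s' := by
          rcases Nat.lt_or_ge k 2 with hk2 | hk2
          · have hkeq : k = 1 := by omega
            have hX1 : X = Q - 1 := by rw [hXdef, hkeq, pow_one]; field_simp
            have hC2 : Ck1 = (Q-1)*(P+1) := by
              rw [hCk1def, hkeq, pow_one]; field_simp; ring
            have hB1 := lemB1core hQ hP hs0.le hs1.le hPs
            rw [hkeq, hX1, hC2, pow_one, pow_one]
            calc (Q*Q - 1)*Q*(Q-1) = ((Q*Q-1)*Q)*(Q-1) := by ring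
              _ ≤ (P * ((Q-1)*(P+1))^s')*(Q-1) := mul_le_mul_of_nonneg_right hB1 hQm1.le
              _ = (Q-1) * P * ((Q-1)*(P+1))^s' := by ring
          · have hqk2 : Q*Q ≤ Q^k := by
              calc Q*Q = Q^2 := by ring
                _ ≤ Q^k := pow_le_pow_right₀ (by linarith) (by omega)
            have hb2 := lemB2_abs (pk := P^k) (qk := Q^k) hQ hP hs0.le hs1.le hPk1 hqk2 hPsk
            rw [← hXdef, ← hCk1def] at hb2
            exact hb2
        have hWs : W^s' * P^k ≤ Q^k * W := by
          have hWP1 : (1:ℝ) ≤ W/(P^k) := (one_le_div hPkpos).2 hPkW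
          have h1 : W = P^k * (W/(P^k)) := (mul_div_cancel₀ W (ne_of_gt hPkpos)).symm
          have h2 : W ^ s' = (P^k)^s' * (W/(P^k))^s' := by
            rw [← Real.mul_rpow hPkpos.le (by positivity), ← h1]
          rw [h2, hPsk]
          have h3 : (W/(P^k))^s' ≤ W/(P^k) := by
            calc (W/(P^k))^s' ≤ (W/(P^k))^(1:ℝ) :=
                  Real.rpow_le_rpow_of_exponent_le hWP1 hs1.le
              _ = W/(P^k) := Real.rpow_one _
          calc Q^k * (W/P^k)^s' * P^k ≤ Q^k * (W/P^k) * P^k := by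
                apply mul_le_mul_of_nonneg_right _ hPkpos.le
                exact mul_le_mul_of_nonneg_left h3 (by positivity)
            _ = Q^k * W := by field_simp
        have hstar : (Q^k*Q - 1) * W^s' * X ≤ (Q^k - 1) * Ck1^s' * W := by
          have hMk1X : 0 ≤ (Q^k*Q - 1) * X := mul_nonneg (by linarith) hX0.le
          have t3 : (Q^k*Q - 1) * W^s' * X * P^k ≤ (Q^k - 1) * Ck1^s' * W * P^k := by
            calc (Q^k*Q - 1) * W^s' * X * P^k = (Q^k*Q - 1) * X * (W^s' * P^k) := by ring
              _ ≤ (Q^k*Q - 1) * X * (Q^k * W) := mul_le_mul_of_nonneg_left hWs hMk1X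
              _ = (Q^k*Q - 1) * Q^k * X * W := by ring
              _ ≤ (Q^k - 1) * P^k * Ck1^s' * W :=
                  mul_le_mul_of_nonneg_right hBcomb (by linarith)
              _ = (Q^k - 1) * Ck1^s' * W * P^k := by ring
          exact le_of_mul_le_mul_right t3 (by linarith)
        have hI1 := bern_tangent hX0 hx0 hs0.le hs1.le
        have hI2 := bern_tangent hW0 hV0.le hs0.le hs1.le
        have hVW : V - W = X - x := by rw [hVdef, hWdef]; ring
        rw [hVW] at hI2
        have m1 : s' * X^s' * (X - x) ≤ X * (X^s' - x^s') := by linarith [hI1]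
        have m2 : W * (V^s' - W^s') ≤ s' * W^s' * (X - x) := by linarith [hI2]
        have hMknn : (0:ℝ) ≤ (Q^k - 1) * Ck1^s' := mul_nonneg (by linarith) hCk1s0
        have hMONO : (Q^k*Q - 1) * (V^s' - W^s') * X^s' ≤ (Q^k - 1) * Ck1^s' * (X^s' - x^s') := by
          have hWX : (0:ℝ) < W * X := mul_pos hW0 hX0
          have final : ((Q^k*Q-1) * (V^s' - W^s') * X^s') * (W*X)
              ≤ ((Q^k-1) * Ck1^s' * (X^s' - x^s')) * (W*X) := by
            calc ((Q^k*Q-1) * (V^s' - W^s') * X^s') * (W*X)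
                = ((Q^k*Q-1) * X^s' * X) * (W * (V^s' - W^s')) := by ring
              _ ≤ ((Q^k*Q-1) * X^s' * X) * (s' * W^s' * (X-x)) := by
                  apply mul_le_mul_of_nonneg_left m2
                  exact mul_nonneg (mul_nonneg (by linarith) hXs0.le) hX0.le
              _ = (s' * (X-x) * X^s') * ((Q^k*Q-1) * W^s' * X) := by ring
              _ ≤ (s' * (X-x) * X^s') * ((Q^k-1) * Ck1^s' * W) := by
                  apply mul_le_mul_of_nonneg_left hstar
                  exact mul_nonneg (mul_nonneg hs0.le (by linarith)) hXs0.le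
              _ = ((Q^k-1) * Ck1^s' * W) * (s' * X^s' * (X-x)) := by ring
              _ ≤ ((Q^k-1) * Ck1^s' * W) * (X * (X^s' - x^s')) := by
                  apply mul_le_mul_of_nonneg_left m1
                  exact mul_nonneg hMknn hW0.le
              _ = ((Q^k-1) * Ck1^s' * (X^s' - x^s')) * (W*X) := by ring
          exact le_of_mul_le_mul_right final hWX
        have scaled1 : N' * X^s' * Ck1^s' ≤ (Q^k - 1) * x^s' * Ck1^s' :=
          mul_le_mul_of_nonneg_right IH hCk1s0
        have scaled2 : Ck1^s' * ((Q^k - 1) + b*Q^k) * X^s' ≤ (Q^k*Q - 1) * V^s' * X^s' :=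
          mul_le_mul_of_nonneg_right hc4 hXs0.le
        have gfinal : ((N' + b*Q^k) * Ck1^s') * X^s' ≤ ((Q^k*Q - 1) * W^s') * X^s' := by
          linarith [scaled1, scaled2, hMONO]
        exact le_of_mul_le_mul_right gfinal hXs0

/-- For `k ≥ 1` and integers `a_1, …, a_k` with `0 ≤ a_i ≤ q−1` and `a_k ≥ 1`
(here indexed as `a 0, …, a (k-1)`),
`(Σ a_i q^{i-1}) / (Σ a_i p^{i-1})^s ≤ (q^k − 1) / (((q−1)/(p−1))(p^k − 1))^s`,
where `s = log q / log p`. -/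
theorem digit_sum_density_le
    (p q : ℕ) (hq : 2 ≤ q) (hqp : q ≤ p) (hdvd : q ∣ p)
    (k : ℕ) (hk : 1 ≤ k) (a : ℕ → ℤ)
    (ha : ∀ i < k, 0 ≤ a i ∧ a i ≤ (q : ℤ) - 1) (hak : 1 ≤ a (k - 1)) :
    (∑ i ∈ Finset.range k, (a i : ℝ) * (q : ℝ) ^ i) /
        (∑ i ∈ Finset.range k, (a i : ℝ) * (p : ℝ) ^ i) ^ (Real.log q / Real.log p)
      ≤ ((q : ℝ) ^ k - 1) /
        ((((q : ℝ) - 1) / ((p : ℝ) - 1)) * ((p : ℝ) ^ k - 1)) ^ (Real.log q / Real.log p) := by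
  have hq1R : (1:ℝ) < (q:ℝ) := by exact_mod_cast hq
  have hqm1 : (0:ℝ) < (q:ℝ) - 1 := by linarith
  have haknn : ∀ i, i < k → (0:ℝ) ≤ (a i : ℝ) := by
    intro i hi; exact_mod_cast (ha i hi).1
  by_cases hpq : p = q
  · subst hpq
    have hlog : Real.log (p:ℝ) ≠ 0 := ne_of_gt (Real.log_pos hq1R)
    rw [div_self hlog, Real.rpow_one, Real.rpow_one,
      div_self (ne_of_gt hqm1), one_mul]
    have hN0 : 0 < ∑ i ∈ Finset.range k, (a i : ℝ) * (p:ℝ) ^ i := by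
      have hterm : (1:ℝ) ≤ (a (k-1) : ℝ) * (p:ℝ)^(k-1) := by
        have h1 : (1:ℝ) ≤ (a (k-1) : ℝ) := by exact_mod_cast hak
        have h2 : (1:ℝ) ≤ (p:ℝ)^(k-1) := one_le_pow₀ (by linarith)
        nlinarith
      have hmem : k - 1 ∈ Finset.range k := Finset.mem_range.2 (by omega)
      have hle := Finset.single_le_sum (f := fun i => (a i : ℝ) * (p:ℝ)^i)
        (fun i hi => mul_nonneg (haknn i (Finset.mem_range.mp hi))
          (pow_nonneg (by linarith) i)) hmem
      have hle' : (a (k-1) : ℝ) * (p:ℝ)^(k-1) ≤ ∑ i ∈ Finset.range k, (a i : ℝ) * (p:ℝ)^i := hle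
      linarith
    have hM0 : (0:ℝ) < (p:ℝ)^k - 1 := by
      have := one_lt_pow₀ hq1R (by omega : k ≠ 0)
      linarith
    rw [div_self (ne_of_gt hN0), div_self (ne_of_gt hM0)]
  · -- q < p, so p ≥ 2q
    obtain ⟨m, rfl⟩ := hdvd
    have hm2 : 2 ≤ m := by
      rcases Nat.lt_or_ge m 2 with h | h
      · interval_cases m
        · omega
        · omega
      · exact h
    have hP2Q : 2*(q:ℝ) ≤ ((q*m : ℕ):ℝ) := by
      have : 2*q ≤ q*m := by nlinarith
      push_cast
      exact_mod_cast this
    have hQ2 : (2:ℝ) ≤ (q:ℝ) := by exact_mod_cast hq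
    have hp1R : (1:ℝ) < ((q*m:ℕ):ℝ) := by
      have : 2 ≤ q*m := by omega
      exact_mod_cast (by omega : 1 < q*m)
    have ha' : ∀ i, i < k → (((a i : ℝ)) = 0 ∨ 1 ≤ ((a i : ℝ))) ∧ ((a i : ℝ)) ≤ (q:ℝ) - 1 := by
      intro i hi
      constructor
      · rcases eq_or_lt_of_le (ha i hi).1 with h | h
        · left; exact_mod_cast h.symm
        · right; exact_mod_cast h
      · have := (ha i hi).2
        have h2 : (a i : ℝ) ≤ ((q:ℤ):ℝ) - 1 := by exact_mod_cast this
        exact_mod_cast h2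
    have key := main_ind (Q := (q:ℝ)) (P := ((q*m:ℕ):ℝ)) hQ2 hP2Q
      (fun i => (a i : ℝ)) k ha'
    have hCeq : (((q:ℝ)-1)/(((q*m:ℕ):ℝ)-1)) * (((q*m:ℕ):ℝ)^k-1)
        = ((q:ℝ)-1)*(((q*m:ℕ):ℝ)^k-1)/(((q*m:ℕ):ℝ)-1) := by ring
    rw [hCeq]
    have hD0 : 0 < ∑ i ∈ Finset.range k, (a i : ℝ) * ((q*m:ℕ):ℝ) ^ i := by
      have hterm : (1:ℝ) ≤ (a (k-1) : ℝ) * ((q*m:ℕ):ℝ)^(k-1) := by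
        have h1 : (1:ℝ) ≤ (a (k-1) : ℝ) := by exact_mod_cast hak
        have h2 : (1:ℝ) ≤ ((q*m:ℕ):ℝ)^(k-1) := one_le_pow₀ (by linarith)
        nlinarith
      have hmem : k - 1 ∈ Finset.range k := Finset.mem_range.2 (by omega)
      have hle := Finset.single_le_sum (f := fun i => (a i : ℝ) * ((q*m:ℕ):ℝ)^i)
        (fun i hi => mul_nonneg (haknn i (Finset.mem_range.mp hi))
          (pow_nonneg (by linarith) i)) hmem
      have hle' : (a (k-1) : ℝ) * ((q*m:ℕ):ℝ)^(k-1) ≤ ∑ i ∈ Finset.range k, (a i : ℝ) * ((q*m:ℕ):ℝ)^i := hle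
      linarith
    have hpk1 : (1:ℝ) < ((q*m:ℕ):ℝ)^k := one_lt_pow₀ hp1R (by omega)
    have hC0 : (0:ℝ) < ((q:ℝ)-1)*(((q*m:ℕ):ℝ)^k-1)/(((q*m:ℕ):ℝ)-1) :=
      div_pos (mul_pos hqm1 (by linarith)) (by linarith)
    rw [div_le_div_iff₀
      (Real.rpow_pos_of_pos hD0 _) (Real.rpow_pos_of_pos hC0 _)]
    exact key
end
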